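/- arXiv:2201.08756 — 10 statements merged into one kernel-verified Lean document; each statement's English description precedes it below -/
import Mathlib

section
/- Let y ∈ ℝⁿ, X an n×d real matrix, D a d×d positive semidefinite real matrix, and V an n×n positive semidefinite real matrix, and set N = X D Xᵀ + V. Then the constraint set Θ(D,V) = {β ∈ ℝᵈ : y − Xβ ∈ range(V) and β ∈ range(D)} is nonempty if and only if y ∈ range(N). -/
open Matrix
open scoped MatrixOrder

/-! Write `D = SᵀS` and `V = TᵀT`. Then `N = M Mᵀ` with `M = [X Sᵀ | Tᵀ]`, and over an ordered
field `M Mᵀ` has the same rank, hence the same range, as `M`; so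
`range N = X (range Sᵀ) + range Tᵀ`, which contains `X (range D) + range V`.
Conversely, `y = N z` is attained by `β = D Xᵀ z`. -/

namespace Matrix

variable {R m k l : Type*} [Fintype k] [Fintype l]

theorem range_mulVecLin_fromCols [CommSemiring R] (A : Matrix m k R) (B : Matrix m l R) :
    LinearMap.range (fromCols A B).mulVecLin =
      LinearMap.range A.mulVecLin ⊔ LinearMap.range B.mulVecLin := by
  ext y
  simp only [Submodule.mem_sup, LinearMap.mem_range, mulVecLin_apply]
  constructor
  · rintro ⟨v, rfl⟩
    exact ⟨_, ⟨v ∘ Sum.inl, rfl⟩, _, ⟨v ∘ Sum.inr, rfl⟩, (fromCols_mulVec A B v).symm⟩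
  · rintro ⟨_, ⟨u, rfl⟩, _, ⟨v, rfl⟩, rfl⟩
    exact ⟨Sum.elim u v, fromCols_mulVec_sumElim A B u v⟩

variable [Fintype m] [Field R] [LinearOrder R] [IsStrictOrderedRing R]

theorem range_mulVecLin_mul_transpose (A : Matrix m k R) :
    LinearMap.range (A * Aᵀ).mulVecLin = LinearMap.range A.mulVecLin := by
  refine Submodule.eq_of_le_of_finrank_eq ?_ A.rank_self_mul_transpose
  rw [mulVecLin_mul]
  exact LinearMap.range_comp_le_range _ _

theorem range_mulVecLin_mul_transpose_add_mul_transpose (A : Matrix m k R) (B : Matrix m l R) :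
    LinearMap.range (A * Aᵀ + B * Bᵀ).mulVecLin =
      LinearMap.range A.mulVecLin ⊔ LinearMap.range B.mulVecLin := by
  rw [← range_mulVecLin_fromCols, ← range_mulVecLin_mul_transpose (fromCols A B),
    transpose_fromCols, fromCols_mul_fromRows]

end Matrix

theorem Matrix.PosSemidef.exists_eq_transpose_mul_self {n : Type*} [Fintype n] [DecidableEq n]
    {D : Matrix n n ℝ} (hD : D.PosSemidef) : ∃ S : Matrix n n ℝ, D = Sᵀ * S := by
  obtain ⟨S, hS⟩ := CStarAlgebra.nonneg_iff_eq_star_mul_self.mp hD.nonneg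
  exact ⟨S, by rwa [star_eq_conjTranspose, conjTranspose_eq_transpose_of_trivial] at hS⟩

/-- The constraint set `Θ(D,V) = {β : y − Xβ ∈ range(V), β ∈ range(D)}` is nonempty
iff `y ∈ range(X D Xᵀ + V)`. -/
theorem stmt0 {n d : ℕ} (y : Fin n → ℝ) (X : Matrix (Fin n) (Fin d) ℝ)
    (D : Matrix (Fin d) (Fin d) ℝ) (V : Matrix (Fin n) (Fin n) ℝ)
    (hD : D.PosSemidef) (hV : V.PosSemidef) :
    {β : Fin d → ℝ |
        y - X.mulVec β ∈ Set.range V.mulVec ∧ β ∈ Set.range D.mulVec}.Nonempty ↔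
      y ∈ Set.range (X * D * Xᵀ + V).mulVec := by
  constructor
  · rintro ⟨β, ⟨w, hw⟩, γ, rfl⟩
    obtain ⟨S, rfl⟩ := hD.exists_eq_transpose_mul_self
    obtain ⟨T, rfl⟩ := hV.exists_eq_transpose_mul_self
    have hN : X * (Sᵀ * S) * Xᵀ + Tᵀ * T = (X * Sᵀ) * (X * Sᵀ)ᵀ + Tᵀ * Tᵀᵀ := by
      simp only [transpose_mul, transpose_transpose, Matrix.mul_assoc]
    have hy : y = (X * Sᵀ) *ᵥ (S *ᵥ γ) + Tᵀ *ᵥ (T *ᵥ w) := by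
      simp only [mulVec_mulVec, Matrix.mul_assoc] at hw ⊢
      rw [hw, add_sub_cancel]
    rw [← coe_mulVecLin, ← LinearMap.coe_range, SetLike.mem_coe, hN,
      range_mulVecLin_mul_transpose_add_mul_transpose, hy]
    exact Submodule.add_mem_sup ⟨_, rfl⟩ ⟨_, rfl⟩
  · rintro ⟨z, rfl⟩
    refine ⟨D *ᵥ Xᵀ *ᵥ z, ⟨z, ?_⟩, _, rfl⟩
    rw [add_mulVec, ← mulVec_mulVec, ← mulVec_mulVec, add_sub_cancel_left]
end

section
/- Let y ∈ ℝⁿ, X an n×d real matrix, D a d×d positive semidefinite real matrix, V an n×n positive semidefinite real matrix, and N = X D Xᵀ + V. If y ∈ range(N), then β̂ = D Xᵀ N† y belongs to Θ(D,V) = {β : y − Xβ ∈ range(V), β ∈ range(D)} and is the unique minimizer over Θ(D,V) of the function β ↦ (y − Xβ)ᵀ V† (y − Xβ) + βᵀ D† β. -/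
/-!
Write an admissible `β` as `β = D u` with residual `y - X β = V v`. Since `A A† A = A` for
symmetric `A`, the objective becomes `Q(β) = vᵀ V v + uᵀ D u`, and for `β̂` it is the same form at
`(w, Xᵀ w)` with `w = N† y`, because `N w = y`. Both pairs satisfy `V v + X D u = y`, so the cross
term of `Q(β) - Q(β̂)` is `wᵀ (y - y) = 0`, leaving `(v - w)ᵀ V (v - w) + (u - Xᵀ w)ᵀ D (u - Xᵀ w)`.
This is nonnegative, and if it vanishes then `D (u - Xᵀ w) = 0`, i.e. `β = β̂`.
-/

open Matrix

/-- The four Penrose conditions: `B` is the Moore–Penrose pseudoinverse of `A`. -/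
def IsMoorePenrose {m n : Type*} [Fintype m] [Fintype n]
    (A : Matrix m n ℝ) (B : Matrix n m ℝ) : Prop :=
  A * B * A = A ∧ B * A * B = B ∧ (A * B)ᵀ = A * B ∧ (B * A)ᵀ = B * A

variable {R m k : Type*} [CommRing R] [Fintype m] [Fintype k]

namespace Matrix.IsSymm

variable {A : Matrix m m R}

lemma dotProduct_mulVec_comm (hA : A.IsSymm) (a b : m → R) :
    a ⬝ᵥ A *ᵥ b = b ⬝ᵥ A *ᵥ a := by
  rw [← dotProduct_transpose_mulVec, hA.eq]

lemma dotProduct_mulVec_eq_add_sub (hA : A.IsSymm) (a b : m → R) :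
    b ⬝ᵥ A *ᵥ b = a ⬝ᵥ A *ᵥ a + 2 * (a ⬝ᵥ A *ᵥ (b - a)) + (b - a) ⬝ᵥ A *ᵥ (b - a) := by
  have hcomm := hA.dotProduct_mulVec_comm a b
  simp only [mulVec_sub, dotProduct_sub, sub_dotProduct]
  linear_combination -hcomm

lemma mulVec_dotProduct_mulVec_mulVec {B : Matrix m m R} (hA : A.IsSymm) (hAB : A * B * A = A)
    (t : m → R) : A *ᵥ t ⬝ᵥ B *ᵥ A *ᵥ t = t ⬝ᵥ A *ᵥ t := by
  rw [dotProduct_comm, ← dotProduct_transpose_mulVec, hA.eq, mulVec_mulVec, mulVec_mulVec,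
    hAB]

end Matrix.IsSymm

def glsObjective (y : m → R) (X : Matrix m k R) (Vd : Matrix m m R) (Dd : Matrix k k R)
    (β : k → R) : R :=
  (y - X *ᵥ β) ⬝ᵥ Vd *ᵥ (y - X *ᵥ β) + β ⬝ᵥ Dd *ᵥ β

variable {y : m → R} {X : Matrix m k R} {V Vd : Matrix m m R} {D Dd : Matrix k k R}

lemma glsObjective_eq_add_sub (hV : V.IsSymm) (hD : D.IsSymm) (hVd : V * Vd * V = V)
    (hDd : D * Dd * D = D) {w v : m → R} {u : k → R} (hres : y - X *ᵥ D *ᵥ Xᵀ *ᵥ w = V *ᵥ w)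
    (hv : V *ᵥ v = y - X *ᵥ D *ᵥ u) :
    glsObjective y X Vd Dd (D *ᵥ u) = glsObjective y X Vd Dd (D *ᵥ Xᵀ *ᵥ w) +
      ((v - w) ⬝ᵥ V *ᵥ (v - w) + (u - Xᵀ *ᵥ w) ⬝ᵥ D *ᵥ (u - Xᵀ *ᵥ w)) := by
  have hcross : w ⬝ᵥ V *ᵥ (v - w) + Xᵀ *ᵥ w ⬝ᵥ D *ᵥ (u - Xᵀ *ᵥ w) = 0 := by
    have hsum : V *ᵥ (v - w) + X *ᵥ D *ᵥ (u - Xᵀ *ᵥ w) = 0 := by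
      simp only [mulVec_sub, hv, ← hres]
      abel
    rw [dotProduct_comm (Xᵀ *ᵥ w), dotProduct_transpose_mulVec, ← dotProduct_add, hsum,
      dotProduct_zero]
  simp only [glsObjective]
  rw [← hv, hres, hV.mulVec_dotProduct_mulVec_mulVec hVd, hD.mulVec_dotProduct_mulVec_mulVec hDd,
    hV.mulVec_dotProduct_mulVec_mulVec hVd, hD.mulVec_dotProduct_mulVec_mulVec hDd,
    hV.dotProduct_mulVec_eq_add_sub w v, hD.dotProduct_mulVec_eq_add_sub (Xᵀ *ᵥ w) u]
  linear_combination 2 * hcross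

/-- If `y ∈ range(N)` where `N = X D Xᵀ + V`, then `β̂ = D Xᵀ N† y` belongs to
`Θ(D,V)` and is the unique minimizer over `Θ(D,V)` of
`β ↦ (y − Xβ)ᵀ V† (y − Xβ) + βᵀ D† β`. -/
theorem stmt1 {n d : ℕ} (y : Fin n → ℝ) (X : Matrix (Fin n) (Fin d) ℝ)
    (D : Matrix (Fin d) (Fin d) ℝ) (V : Matrix (Fin n) (Fin n) ℝ)
    (hD : D.PosSemidef) (hV : V.PosSemidef)
    (Dd : Matrix (Fin d) (Fin d) ℝ) (hDd : IsMoorePenrose D Dd)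
    (Vd : Matrix (Fin n) (Fin n) ℝ) (hVd : IsMoorePenrose V Vd)
    (Nd : Matrix (Fin n) (Fin n) ℝ) (hNd : IsMoorePenrose (X * D * Xᵀ + V) Nd)
    (hy : y ∈ Set.range (X * D * Xᵀ + V).mulVec) :
    (D * Xᵀ * Nd).mulVec y ∈
      {β : Fin d → ℝ | y - X.mulVec β ∈ Set.range V.mulVec ∧ β ∈ Set.range D.mulVec} ∧
    (∀ β ∈ {β : Fin d → ℝ |
        y - X.mulVec β ∈ Set.range V.mulVec ∧ β ∈ Set.range D.mulVec},
      (y - X.mulVec ((D * Xᵀ * Nd).mulVec y)) ⬝ᵥ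
          Vd.mulVec (y - X.mulVec ((D * Xᵀ * Nd).mulVec y)) +
        ((D * Xᵀ * Nd).mulVec y) ⬝ᵥ Dd.mulVec ((D * Xᵀ * Nd).mulVec y) ≤
      (y - X.mulVec β) ⬝ᵥ Vd.mulVec (y - X.mulVec β) + β ⬝ᵥ Dd.mulVec β) ∧
    (∀ β ∈ {β : Fin d → ℝ |
        y - X.mulVec β ∈ Set.range V.mulVec ∧ β ∈ Set.range D.mulVec},
      (y - X.mulVec β) ⬝ᵥ Vd.mulVec (y - X.mulVec β) + β ⬝ᵥ Dd.mulVec β =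
        (y - X.mulVec ((D * Xᵀ * Nd).mulVec y)) ⬝ᵥ
            Vd.mulVec (y - X.mulVec ((D * Xᵀ * Nd).mulVec y)) +
          ((D * Xᵀ * Nd).mulVec y) ⬝ᵥ Dd.mulVec ((D * Xᵀ * Nd).mulVec y) →
        β = (D * Xᵀ * Nd).mulVec y) := by
  obtain ⟨z, hz⟩ := hy
  set w := Nd *ᵥ y
  have hw : (X * D * Xᵀ + V) *ᵥ w = y := by
    simp only [w, ← hz, mulVec_mulVec, ← Matrix.mul_assoc, hNd.1]
  have hβ : (D * Xᵀ * Nd) *ᵥ y = D *ᵥ Xᵀ *ᵥ w := by simp only [w, mulVec_mulVec, Matrix.mul_assoc]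
  have hres : y - X *ᵥ D *ᵥ Xᵀ *ᵥ w = V *ᵥ w := by
    rw [← hw, add_mulVec, ← mulVec_mulVec, ← mulVec_mulVec, add_sub_cancel_left]
  have hsplit : ∀ {v u}, V *ᵥ v = y - X *ᵥ D *ᵥ u →
      glsObjective y X Vd Dd (D *ᵥ u) = glsObjective y X Vd Dd (D *ᵥ Xᵀ *ᵥ w) +
        ((v - w) ⬝ᵥ V *ᵥ (v - w) + (u - Xᵀ *ᵥ w) ⬝ᵥ D *ᵥ (u - Xᵀ *ᵥ w)) :=
    glsObjective_eq_add_sub hV.isHermitian hD.isHermitian hVd.1 hDd.1 hres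
  have hnonneg : ∀ {m} {A : Matrix (Fin m) (Fin m) ℝ}, A.PosSemidef → ∀ t, 0 ≤ t ⬝ᵥ A *ᵥ t :=
    fun hA t => by simpa only [star_trivial] using hA.dotProduct_mulVec_nonneg t
  rw [hβ]
  refine ⟨⟨⟨w, hres.symm⟩, ⟨Xᵀ *ᵥ w, rfl⟩⟩, ?_, ?_⟩ <;> rintro _ ⟨⟨v, hv⟩, ⟨u, rfl⟩⟩
  · change glsObjective y X Vd Dd _ ≤ glsObjective y X Vd Dd _
    rw [hsplit hv]
    linarith [hnonneg hV (v - w), hnonneg hD (u - Xᵀ *ᵥ w)]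
  · change glsObjective y X Vd Dd _ = glsObjective y X Vd Dd _ → _
    rw [hsplit hv, add_eq_left]
    intro hzero
    have hDu : (u - Xᵀ *ᵥ w) ⬝ᵥ D *ᵥ (u - Xᵀ *ᵥ w) = 0 := by
      linarith [hnonneg hV (v - w), hnonneg hD (u - Xᵀ *ᵥ w)]
    have := (hD.dotProduct_mulVec_zero_iff _).mp (by rwa [star_trivial])
    rwa [mulVec_sub, sub_eq_zero] at this
end

section
/- Let y ∈ ℝⁿ, X an n×d real matrix and V an n×n positive semidefinite real matrix. Then the set {β ∈ ℝᵈ : y − Xβ ∈ range(V)} is nonempty if and only if y ∈ range(X Xᵀ + V). -/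
/-!
Positive semidefinite matrices factor as `A = P Pᴴ`, `B = Q Qᴴ`, so `A + B = C Cᴴ` for the block
matrix `C = [P | Q]`. Since `M Mᴴ` has the same rank as `M`, it has the same range, whence
`range (A + B) = range P + range Q = range A + range B`. For `A = X Xᵀ` and `B = V` this reads
`range (X Xᵀ + V) = range X + range V`, and `y` lies there exactly when `y - X β ∈ range V` for
some `β`.
-/

open Matrix

theorem Submodule.mem_range_sup_iff_exists_sub_mem {R M N : Type*} [Ring R] [AddCommGroup M]
    [Module R M] [AddCommGroup N] [Module R N] (f : M →ₗ[R] N) (q : Submodule R N) (y : N) :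
    y ∈ LinearMap.range f ⊔ q ↔ ∃ x, y - f x ∈ q := by
  simp only [Submodule.mem_sup, LinearMap.mem_range, exists_exists_eq_and]
  constructor
  · rintro ⟨x, z, hz, rfl⟩
    exact ⟨x, by simpa using hz⟩
  · rintro ⟨x, hx⟩
    exact ⟨x, _, hx, add_sub_cancel _ _⟩

namespace Matrix

theorem range_mulVecLin_fromCols_s5 {R m n₁ n₂ : Type*} [CommSemiring R] [Fintype n₁] [Fintype n₂]
    (A₁ : Matrix m n₁ R) (A₂ : Matrix m n₂ R) :
    LinearMap.range (fromCols A₁ A₂).mulVecLin =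
      LinearMap.range A₁.mulVecLin ⊔ LinearMap.range A₂.mulVecLin := by
  ext y
  simp only [Submodule.mem_sup, LinearMap.mem_range, mulVecLin_apply, exists_exists_eq_and]
  constructor
  · rintro ⟨v, rfl⟩
    exact ⟨v ∘ Sum.inl, v ∘ Sum.inr, (fromCols_mulVec A₁ A₂ v).symm⟩
  · rintro ⟨v₁, v₂, rfl⟩
    exact ⟨Sum.elim v₁ v₂, fromCols_mulVec_sumElim A₁ A₂ v₁ v₂⟩

theorem range_mulVecLin_mul_conjTranspose {R m n : Type*} [Field R] [PartialOrder R] [StarRing R]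
    [StarOrderedRing R] [Fintype m] [Fintype n] (A : Matrix m n R) :
    LinearMap.range (A * Aᴴ).mulVecLin = LinearMap.range A.mulVecLin := by
  refine Submodule.eq_of_le_of_finrank_le ?_ (rank_self_mul_conjTranspose A).ge
  rintro _ ⟨v, rfl⟩
  exact ⟨Aᴴ *ᵥ v, by simp [mulVec_mulVec]⟩

open scoped ComplexOrder MatrixOrder in
theorem PosSemidef.range_mulVecLin_add {𝕜 n : Type*} [RCLike 𝕜] [Fintype n]
    {A B : Matrix n n 𝕜} (hA : A.PosSemidef) (hB : B.PosSemidef) :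
    LinearMap.range (A + B).mulVecLin =
      LinearMap.range A.mulVecLin ⊔ LinearMap.range B.mulVecLin := by
  classical
  obtain ⟨P, rfl⟩ := CStarAlgebra.nonneg_iff_eq_mul_star_self.mp hA.nonneg
  obtain ⟨Q, rfl⟩ := CStarAlgebra.nonneg_iff_eq_mul_star_self.mp hB.nonneg
  have hC : fromCols P Q * (fromCols P Q)ᴴ = P * Pᴴ + Q * Qᴴ := by
    rw [conjTranspose_fromCols_eq_fromRows_conjTranspose, fromCols_mul_fromRows]
  simp only [star_eq_conjTranspose]
  rw [← hC, range_mulVecLin_mul_conjTranspose, range_mulVecLin_fromCols_s5,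
    range_mulVecLin_mul_conjTranspose, range_mulVecLin_mul_conjTranspose]

end Matrix

/-- The set `{β : y − Xβ ∈ range(V)}` is nonempty iff `y ∈ range(X Xᵀ + V)`. -/
theorem stmt5 {n d : ℕ} (y : Fin n → ℝ) (X : Matrix (Fin n) (Fin d) ℝ)
    (V : Matrix (Fin n) (Fin n) ℝ) (hV : V.PosSemidef) :
    {β : Fin d → ℝ | y - X.mulVec β ∈ Set.range V.mulVec}.Nonempty ↔
      y ∈ Set.range (X * Xᵀ + V).mulVec := by
  have hXXt : (X * Xᵀ).PosSemidef := by
    simpa using posSemidef_self_mul_conjTranspose X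
  have hrange : LinearMap.range (X * Xᵀ + V).mulVecLin =
      LinearMap.range X.mulVecLin ⊔ LinearMap.range V.mulVecLin := by
    rw [hXXt.range_mulVecLin_add hV, ← conjTranspose_eq_transpose_of_trivial,
      range_mulVecLin_mul_conjTranspose]
  change _ ↔ y ∈ LinearMap.range (X * Xᵀ + V).mulVecLin
  rw [hrange, Submodule.mem_range_sup_iff_exists_sub_mem]
  rfl
end

section
/- Let y ∈ ℝⁿ, X an n×d real matrix and V an n×n positive semidefinite real matrix with y ∈ range(X Xᵀ + V). Set M = I − X X† and β̂ = X† (I − V M (M V M)† M) y. Then y − X β̂ ∈ range(V), and β̂ minimizes (y − Xβ)ᵀ V† (y − Xβ) over all β ∈ ℝᵈ with y − Xβ ∈ range(V). If moreover X has full column rank (rank d), then β̂ is the unique such minimizer. -/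
/-!
Write `M = 1 - X X†` and `Q = (M V M)†`. Since `V` is positive semidefinite, `range (M V)` equals
`range (M V M)`; together with `y ∈ range (X Xᵀ + V)` this makes the fitted residual equal to
`V Q y`. As `Q X = 0`, every admissible residual `y - X β = V w` satisfies `Q (V w) = Q y`, so the
fitted residual is `V Q V w`, and the two values of the objective differ by
`wᵀ (V - V Q V) w = wᵀ (1 - V Q) V (1 - V Q)ᵀ w ≥ 0`, with equality only if `V w = V Q V w`.
-/

open Matrix

namespace IsMoorePenrose

variable {m k : Type*} [Fintype m] [Fintype k] {A : Matrix m k ℝ} {B C : Matrix k m ℝ}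

theorem unique (hB : IsMoorePenrose A B) (hC : IsMoorePenrose A C) : B = C := by
  obtain ⟨hB1, hB2, hB3, hB4⟩ := hB
  obtain ⟨hC1, hC2, hC3, hC4⟩ := hC
  have hAB : A * B = A * C := by
    calc A * B = (A * C * A) * B := by rw [hC1]
    _ = (A * C)ᵀ * (A * B)ᵀ := by rw [hC3, hB3, Matrix.mul_assoc]
    _ = (A * B * A * C)ᵀ := by simp only [← transpose_mul, Matrix.mul_assoc]
    _ = A * C := by rw [hB1, hC3]
  have hBA : B * A = C * A := by
    calc B * A = B * (A * C * A) := by rw [hC1]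
    _ = (B * A)ᵀ * (C * A)ᵀ := by rw [hB4, hC4, Matrix.mul_assoc, Matrix.mul_assoc]
    _ = (C * (A * B * A))ᵀ := by simp only [← transpose_mul, Matrix.mul_assoc]
    _ = C * A := by rw [hB1, hC4]
  calc B = B * A * B := hB2.symm
  _ = C * A * C := by rw [hBA, Matrix.mul_assoc, hAB, ← Matrix.mul_assoc]
  _ = C := hC2

theorem transpose (h : IsMoorePenrose A B) : IsMoorePenrose Aᵀ Bᵀ := by
  obtain ⟨h1, h2, h3, h4⟩ := h
  refine ⟨?_, ?_, ?_, ?_⟩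
  · rw [← transpose_mul, ← transpose_mul, ← Matrix.mul_assoc, h1]
  · rw [← transpose_mul, ← transpose_mul, ← Matrix.mul_assoc, h2]
  · rw [← transpose_mul, transpose_transpose, h4]
  · rw [← transpose_mul, transpose_transpose, h3]

theorem isSymm {A B : Matrix m m ℝ} (hA : A.IsSymm) (h : IsMoorePenrose A B) : B.IsSymm :=
  (hA.eq ▸ h.transpose : IsMoorePenrose A Bᵀ).unique h

theorem eq_mul_transpose_mul_transpose (h : IsMoorePenrose A B) : B = B * Bᵀ * Aᵀ := by
  rw [Matrix.mul_assoc, ← transpose_mul, h.2.2.1, ← Matrix.mul_assoc, h.2.1]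

theorem eq_transpose_mul_transpose_mul (h : IsMoorePenrose A B) : B = Aᵀ * Bᵀ * B := by
  rw [← transpose_mul, h.2.2.2, h.2.1]

theorem mul_eq_left_of_transpose_mul_eq {P : Matrix m m ℝ} (h : IsMoorePenrose A B)
    (hP : Pᵀ * A = A) : B * P = B :=
  calc B * P = B * Bᵀ * (Pᵀ * A)ᵀ := by
        rw [transpose_mul, transpose_transpose, ← Matrix.mul_assoc,
          ← h.eq_mul_transpose_mul_transpose]
  _ = B := by rw [hP, ← h.eq_mul_transpose_mul_transpose]

theorem mul_eq_right_of_mul_transpose_eq {P : Matrix k k ℝ} (h : IsMoorePenrose A B)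
    (hP : A * Pᵀ = A) : P * B = B :=
  calc P * B = (A * Pᵀ)ᵀ * Bᵀ * B := by
        rw [transpose_mul, transpose_transpose, Matrix.mul_assoc, Matrix.mul_assoc,
          ← Matrix.mul_assoc Aᵀ, ← h.eq_transpose_mul_transpose_mul]
  _ = B := by rw [hP, ← h.eq_transpose_mul_transpose_mul]

end IsMoorePenrose

theorem Matrix.PosSemidef.isSymm {m : Type*} [Fintype m] {V : Matrix m m ℝ}
    (hV : V.PosSemidef) : V.IsSymm :=
  isHermitian_iff_isSymm.1 hV.1

theorem Matrix.PosSemidef.mul_eq_zero_of_mul_mul_transpose_eq_zero {m k : Type*} [Fintype m]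
    [Fintype k] {V : Matrix m m ℝ} (hV : V.PosSemidef) {B : Matrix k m ℝ}
    (h : B * V * Bᵀ = 0) : B * V = 0 := by
  suffices V * Bᵀ = 0 by
    rw [← transpose_transpose (B * V), transpose_mul, hV.isSymm.eq, this, transpose_zero]
  refine ext_iff_mulVec.2 fun x => ?_
  rw [zero_mulVec, ← mulVec_mulVec]
  refine (hV.dotProduct_mulVec_zero_iff _).1 ?_
  nth_rw 1 [star_trivial, mulVec_transpose]
  rw [← dotProduct_mulVec, mulVec_mulVec, mulVec_mulVec, h, zero_mulVec, dotProduct_zero]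

theorem IsMoorePenrose.mul_mul_transpose_mul_mul_eq_of_posSemidef {m k : Type*} [Fintype m]
    [Fintype k] {V : Matrix m m ℝ} (hV : V.PosSemidef) {M : Matrix k m ℝ} {Q : Matrix k k ℝ}
    (hQ : IsMoorePenrose (M * V * Mᵀ) Q) : M * V * Mᵀ * Q * (M * V) = M * V := by
  have hVMt : (M - M * V * Mᵀ * Q * M) * V * Mᵀ = 0 := by
    rw [Matrix.sub_mul, Matrix.sub_mul, Matrix.mul_assoc _ M V, Matrix.mul_assoc _ (M * V), hQ.1,
      sub_self]
  have hzero : (M - M * V * Mᵀ * Q * M) * V * (M - M * V * Mᵀ * Q * M)ᵀ = 0 := by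
    rw [transpose_sub, transpose_mul, Matrix.mul_sub, ← Matrix.mul_assoc, hVMt, Matrix.zero_mul,
      sub_zero]
  have := hV.mul_eq_zero_of_mul_mul_transpose_eq_zero hzero
  rw [Matrix.sub_mul, sub_eq_zero] at this
  exact (this.trans (Matrix.mul_assoc _ _ _)).symm

section Sandwich

variable {m : Type*} [Fintype m] {M V Q : Matrix m m ℝ}

theorem IsMoorePenrose.mul_eq_left_of_sandwich (hM : M.IsSymm) (hMM : IsIdempotentElem M)
    (hQ : IsMoorePenrose (M * V * M) Q) : Q * M = Q :=
  hQ.mul_eq_left_of_transpose_mul_eq <| by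
    rw [hM.eq, ← Matrix.mul_assoc, ← Matrix.mul_assoc, hMM.eq]

theorem IsMoorePenrose.mul_eq_right_of_sandwich (hM : M.IsSymm) (hMM : IsIdempotentElem M)
    (hQ : IsMoorePenrose (M * V * M) Q) : M * Q = Q :=
  hQ.mul_eq_right_of_mul_transpose_eq <| by rw [hM.eq, Matrix.mul_assoc, hMM.eq]

theorem IsMoorePenrose.isSymm_of_sandwich (hM : M.IsSymm) (hV : V.IsSymm)
    (hQ : IsMoorePenrose (M * V * M) Q) : Q.IsSymm :=
  hQ.isSymm <| by rw [IsSymm, transpose_mul, transpose_mul, hM.eq, hV.eq, Matrix.mul_assoc]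

theorem IsMoorePenrose.mul_mul_eq_self_of_sandwich (hM : M.IsSymm) (hMM : IsIdempotentElem M)
    (hQ : IsMoorePenrose (M * V * M) Q) : Q * V * Q = Q :=
  calc Q * V * Q = Q * M * V * (M * Q) := by
        rw [hQ.mul_eq_left_of_sandwich hM hMM, hQ.mul_eq_right_of_sandwich hM hMM]
  _ = Q * (M * V * M) * Q := by simp only [Matrix.mul_assoc]
  _ = Q := hQ.2.1

end Sandwich

theorem Matrix.mulVec_dotProduct_mulVec_mulVec {R m k : Type*} [CommSemiring R] [Fintype m]
    [Fintype k] (A : Matrix m k R) (B : Matrix m m R) (x : k → R) :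
    A *ᵥ x ⬝ᵥ B *ᵥ (A *ᵥ x) = x ⬝ᵥ (Aᵀ * B * A) *ᵥ x := by
  rw [eq_comm, ← mulVec_mulVec, ← mulVec_mulVec, dotProduct_mulVec, vecMul_transpose]

section GeneralizedInverse

variable {m : Type*} [Fintype m] {V Vd Q : Matrix m m ℝ}

theorem dotProduct_mulVec_ginv (hV : V.IsSymm) (hVd : V * Vd * V = V) (x : m → ℝ) :
    V *ᵥ x ⬝ᵥ Vd *ᵥ (V *ᵥ x) = x ⬝ᵥ V *ᵥ x := by
  rw [mulVec_dotProduct_mulVec_mulVec, hV.eq, hVd]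

theorem Matrix.PosSemidef.sub_mul_mul_of_mul_mul_eq [DecidableEq m] (hV : V.PosSemidef)
    (hQ : Q.IsSymm) (hQVQ : Q * V * Q = Q) : (V - V * Q * V).PosSemidef := by
  have hfac : V - V * Q * V = (1 - V * Q) * V * (1 - V * Q)ᴴ := by
    rw [conjTranspose_eq_transpose_of_trivial, transpose_sub, transpose_one, transpose_mul,
      hV.isSymm.eq, hQ.eq]
    calc V - V * Q * V = V - V * Q * V - V * Q * V + V * (Q * V * Q) * V := by
          rw [hQVQ]; abel
    _ = (1 - V * Q) * V * (1 - Q * V) := by noncomm_ring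
  exact hfac ▸ hV.mul_mul_conjTranspose_same _

theorem dotProduct_mulVec_ginv_sub (hV : V.IsSymm) (hVd : V * Vd * V = V) (hQ : Q.IsSymm)
    (hQVQ : Q * V * Q = Q) (w : m → ℝ) :
    V *ᵥ w ⬝ᵥ Vd *ᵥ (V *ᵥ w) - V *ᵥ (Q *ᵥ (V *ᵥ w)) ⬝ᵥ Vd *ᵥ (V *ᵥ (Q *ᵥ (V *ᵥ w))) =
      w ⬝ᵥ (V - V * Q * V) *ᵥ w := by
  have hVQVQV : V * Q * V * (Q * V) = V * Q * V := by
    rw [show V * Q * V * (Q * V) = V * (Q * V * Q) * V by simp only [Matrix.mul_assoc], hQVQ]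
  rw [dotProduct_mulVec_ginv hV hVd w, dotProduct_mulVec_ginv hV hVd (Q *ᵥ (V *ᵥ w)),
    mulVec_mulVec w Q V, mulVec_dotProduct_mulVec_mulVec, transpose_mul, hV.eq, hQ.eq, hVQVQV,
    sub_mulVec, dotProduct_sub]

variable [DecidableEq m] (hV : V.PosSemidef) (hVd : V * Vd * V = V) (hQ : Q.IsSymm)
  (hQVQ : Q * V * Q = Q)
include hV hVd hQ hQVQ

theorem dotProduct_mulVec_ginv_le (w : m → ℝ) :
    V *ᵥ (Q *ᵥ (V *ᵥ w)) ⬝ᵥ Vd *ᵥ (V *ᵥ (Q *ᵥ (V *ᵥ w))) ≤ V *ᵥ w ⬝ᵥ Vd *ᵥ (V *ᵥ w) := by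
  rw [← sub_nonneg, dotProduct_mulVec_ginv_sub hV.isSymm hVd hQ hQVQ]
  simpa using (hV.sub_mul_mul_of_mul_mul_eq hQ hQVQ).dotProduct_mulVec_nonneg w

theorem mulVec_eq_of_dotProduct_mulVec_ginv_eq {w : m → ℝ}
    (h : V *ᵥ w ⬝ᵥ Vd *ᵥ (V *ᵥ w) = V *ᵥ (Q *ᵥ (V *ᵥ w)) ⬝ᵥ Vd *ᵥ (V *ᵥ (Q *ᵥ (V *ᵥ w)))) :
    V *ᵥ w = V *ᵥ (Q *ᵥ (V *ᵥ w)) := by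
  have hker : (V - V * Q * V) *ᵥ w = 0 := by
    refine ((hV.sub_mul_mul_of_mul_mul_eq hQ hQVQ).dotProduct_mulVec_zero_iff w).1 ?_
    rw [star_trivial, ← dotProduct_mulVec_ginv_sub hV.isSymm hVd hQ hQVQ, h, sub_self]
  rwa [sub_mulVec, sub_eq_zero, ← mulVec_mulVec, ← mulVec_mulVec] at hker

end GeneralizedInverse

theorem Matrix.mulVec_injective_of_rank_eq_card {K m k : Type*} [Field K] [Fintype m]
    [Fintype k] {A : Matrix m k K} (h : A.rank = Fintype.card k) :
    Function.Injective A.mulVec := by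
  have hdim := LinearMap.finrank_range_add_finrank_ker A.mulVecLin
  rw [Module.finrank_fintype_fun_eq_card, ← h] at hdim
  have hker : LinearMap.ker A.mulVecLin = ⊥ :=
    Submodule.finrank_eq_zero.mp (by unfold Matrix.rank at hdim; omega)
  exact LinearMap.ker_eq_bot.mp hker

namespace IsMoorePenrose

variable {n d : Type*} [Fintype n] [Fintype d] [DecidableEq n] {X : Matrix n d ℝ}
  {Xd : Matrix d n ℝ}

theorem isSymm_one_sub_mul (h : IsMoorePenrose X Xd) : (1 - X * Xd).IsSymm := by
  rw [IsSymm, transpose_sub, transpose_one, h.2.2.1]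

theorem isIdempotentElem_one_sub_mul (h : IsMoorePenrose X Xd) :
    IsIdempotentElem (1 - X * Xd) :=
  IsIdempotentElem.one_sub <| by rw [IsIdempotentElem, ← Matrix.mul_assoc, h.1]

theorem one_sub_mul_mul_eq_zero (h : IsMoorePenrose X Xd) : (1 - X * Xd) * X = 0 := by
  rw [Matrix.sub_mul, Matrix.one_mul, h.1, sub_self]

end IsMoorePenrose

section GeneralizedLeastSquares

variable {n d : Type*} [Fintype n] [Fintype d] [DecidableEq n] {X : Matrix n d ℝ}
  {Xd : Matrix d n ℝ} {V Q : Matrix n n ℝ}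

theorem IsMoorePenrose.mul_eq_zero_of_one_sub_mul_sandwich
    (hQ : IsMoorePenrose ((1 - X * Xd) * V * (1 - X * Xd)) Q) (hXd : IsMoorePenrose X Xd) :
    Q * X = 0 := by
  rw [← hQ.mul_eq_left_of_sandwich hXd.isSymm_one_sub_mul hXd.isIdempotentElem_one_sub_mul,
    Matrix.mul_assoc, hXd.one_sub_mul_mul_eq_zero, Matrix.mul_zero]

theorem gls_residual_eq (hV : V.PosSemidef) (hXd : IsMoorePenrose X Xd)
    (hQ : IsMoorePenrose ((1 - X * Xd) * V * (1 - X * Xd)) Q) {y : n → ℝ}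
    (hy : y ∈ Set.range (X * Xᵀ + V).mulVec) :
    y - X *ᵥ ((Xd * (1 - V * (1 - X * Xd) * Q * (1 - X * Xd))) *ᵥ y) = V *ᵥ (Q *ᵥ y) := by
  obtain ⟨z, rfl⟩ := hy
  have hMs := hXd.isSymm_one_sub_mul
  have hMM := hXd.isIdempotentElem_one_sub_mul
  have hMX := hXd.one_sub_mul_mul_eq_zero
  have hQM := hQ.mul_eq_left_of_sandwich hMs hMM
  have hMQ := hQ.mul_eq_right_of_sandwich hMs hMM
  set M := 1 - X * Xd with hM
  have hWQ : M * V * Mᵀ * Q * (M * V) = M * V :=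
    (hMs.eq.symm ▸ hQ : IsMoorePenrose (M * V * Mᵀ) Q).mul_mul_transpose_mul_mul_eq_of_posSemidef
      hV
  set G := X * Xᵀ + V
  have hXXd : X * Xd = 1 - M := by rw [hM, sub_sub_cancel]
  have hMG : M * G = M * V := by
    rw [Matrix.mul_add, ← Matrix.mul_assoc, hMX, Matrix.zero_mul, zero_add]
  have hMVQG : M * V * Q * G = M * V :=
    calc M * V * Q * G = M * V * (M * Q * M) * G := by rw [hMQ, hQM]
    _ = M * V * Mᵀ * Q * (M * G) := by rw [hMs.eq]; simp only [Matrix.mul_assoc]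
    _ = M * V := by rw [hMG, hWQ]
  have hfit : X * (Xd * (1 - V * M * Q * M)) = (1 - M) * (1 - V * Q) := by
    rw [← Matrix.mul_assoc, hXXd, Matrix.mul_assoc (V * M), hQM, Matrix.mul_assoc, hMQ]
  rw [mulVec_mulVec, mulVec_mulVec, mulVec_mulVec, mulVec_mulVec, ← sub_mulVec, hfit]
  congr 1
  calc G - (1 - M) * (1 - V * Q) * G = V * Q * G + (M * G - M * V * Q * G) := by noncomm_ring
  _ = V * Q * G := by rw [hMG, hMVQG, sub_self, add_zero]

end GeneralizedLeastSquares

/-- With `M = I − X X†` and `β̂ = X† (I − V M (M V M)† M) y`, where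
`y ∈ range(X Xᵀ + V)`: the residual `y − X β̂` lies in `range(V)`, `β̂` minimizes
`(y − Xβ)ᵀ V† (y − Xβ)` over all `β` with `y − Xβ ∈ range(V)`, and if `X` has full
column rank then `β̂` is the unique such minimizer. -/
theorem stmt6 {n d : ℕ} (y : Fin n → ℝ) (X : Matrix (Fin n) (Fin d) ℝ)
    (V : Matrix (Fin n) (Fin n) ℝ) (hV : V.PosSemidef)
    (hy : y ∈ Set.range (X * Xᵀ + V).mulVec)
    (Vd : Matrix (Fin n) (Fin n) ℝ) (hVd : IsMoorePenrose V Vd)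
    (Xd : Matrix (Fin d) (Fin n) ℝ) (hXd : IsMoorePenrose X Xd)
    (Q : Matrix (Fin n) (Fin n) ℝ)
    (hQ : IsMoorePenrose ((1 - X * Xd) * V * (1 - X * Xd)) Q) :
    y - X.mulVec ((Xd * (1 - V * (1 - X * Xd) * Q * (1 - X * Xd))).mulVec y) ∈
        Set.range V.mulVec ∧
      (∀ β : Fin d → ℝ, y - X.mulVec β ∈ Set.range V.mulVec →
        (y - X.mulVec ((Xd * (1 - V * (1 - X * Xd) * Q * (1 - X * Xd))).mulVec y)) ⬝ᵥ
            Vd.mulVec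
              (y - X.mulVec
                ((Xd * (1 - V * (1 - X * Xd) * Q * (1 - X * Xd))).mulVec y)) ≤
          (y - X.mulVec β) ⬝ᵥ Vd.mulVec (y - X.mulVec β)) ∧
      (X.rank = d →
        ∀ β : Fin d → ℝ, y - X.mulVec β ∈ Set.range V.mulVec →
          (y - X.mulVec β) ⬝ᵥ Vd.mulVec (y - X.mulVec β) =
            (y - X.mulVec
                ((Xd * (1 - V * (1 - X * Xd) * Q * (1 - X * Xd))).mulVec y)) ⬝ᵥ
              Vd.mulVec
                (y - X.mulVec
                  ((Xd * (1 - V * (1 - X * Xd) * Q * (1 - X * Xd))).mulVec y)) →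
            β = (Xd * (1 - V * (1 - X * Xd) * Q * (1 - X * Xd))).mulVec y) := by
  have hQs := hQ.isSymm_of_sandwich hXd.isSymm_one_sub_mul hV.isSymm
  have hQVQ := hQ.mul_mul_eq_self_of_sandwich hXd.isSymm_one_sub_mul
    hXd.isIdempotentElem_one_sub_mul
  have hres := gls_residual_eq hV hXd hQ hy
  set βhat := (Xd * (1 - V * (1 - X * Xd) * Q * (1 - X * Xd))) *ᵥ y
  have hfitted (β : Fin d → ℝ) (w : Fin n → ℝ) (hw : V *ᵥ w = y - X *ᵥ β) :
      y - X *ᵥ βhat = V *ᵥ (Q *ᵥ (V *ᵥ w)) := by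
    rw [hres, hw, mulVec_sub, mulVec_mulVec β Q X, hQ.mul_eq_zero_of_one_sub_mul_sandwich hXd,
      zero_mulVec, sub_zero]
  refine ⟨⟨Q *ᵥ y, hres.symm⟩, fun β ⟨w, hw⟩ => ?_, fun hrank β ⟨w, hw⟩ heq => ?_⟩
  · rw [hfitted β w hw, ← hw]
    exact dotProduct_mulVec_ginv_le hV hVd.1 hQs hQVQ w
  · rw [hfitted β w hw, ← hw] at heq
    have hVw := mulVec_eq_of_dotProduct_mulVec_ginv_eq hV hVd.1 hQs hQVQ heq
    refine mulVec_injective_of_rank_eq_card (by simpa using hrank) (sub_right_injective (b := y) ?_)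
    change y - X *ᵥ β = y - X *ᵥ βhat
    rw [← hw, hfitted β w hw]
    exact hVw
end

section
/- Let X be an n×d real matrix with full column rank (rank d) and V₀ an n×n positive semidefinite real matrix. Set M = I − X X† and K̂ = X† (I − V₀ M (M V₀ M)† M). Then K̂ X = I_d, and among all d×n real matrices K with K X = I_d (i.e., all linear unbiased estimators β̂ = K y for the model y = Xβ₀ + ε with Cov[ε] = V₀), the mean squared error tr(K V₀ Kᵀ) is minimized by K = K̂. -/
/-!
Write an unbiased `K` as `K₀ + D` with `K₀ = X† (1 - V₀ M Q M)`. Then `D X = 0`, i.e. `D = D M`,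
so the cross term `K₀ V₀ Dᵀ = (K₀ V₀ M) Dᵀ` vanishes as soon as `K₀ V₀ M = 0`, and
`tr (K V₀ Kᵀ) = tr (K₀ V₀ K₀ᵀ) + tr (D V₀ Dᵀ) ≥ tr (K₀ V₀ K₀ᵀ)`.
The identity `K₀ V₀ M = 0` amounts to `V₀ M Q (M V₀ M) = V₀ M`, which holds for every generalized
inverse `Q` of `M V₀ M`: writing `V₀ = Cᴴ C`, `(C M)ᴴ (C M) Y = 0` forces `C M Y = 0`.
-/

open Matrix

namespace Matrix

variable {m n p : Type*}

theorem mulVec_injective_of_rank_eq_card_s7 {K : Type*} [Field K] [Fintype n] {A : Matrix m n K}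
    (hA : A.rank = Fintype.card n) : Function.Injective A.mulVec := by
  have hker := LinearMap.finrank_range_add_finrank_ker A.mulVecLin
  rw [← Matrix.rank, hA, Module.finrank_fintype_fun_eq_card, add_eq_left,
    Submodule.finrank_eq_zero] at hker
  exact LinearMap.ker_eq_bot.mp hker

theorem mul_eq_one_of_mul_mul_eq_self_of_rank_eq_card {K : Type*} [Field K] [Fintype m]
    [Fintype n] [DecidableEq n] {A : Matrix m n K} {B : Matrix n m K} (hA : A.rank = Fintype.card n)
    (hABA : A * B * A = A) : B * A = 1 := by
  refine ext_of_mulVec_single fun j => mulVec_injective_of_rank_eq_card_s7 hA ?_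
  rw [mulVec_mulVec, mulVec_mulVec, ← Matrix.mul_assoc, hABA, Matrix.mul_one]

open scoped ComplexOrder MatrixOrder in
theorem PosSemidef.conjTranspose_mul_mul_mul_eq_zero_iff {𝕜 : Type*} [RCLike 𝕜] [Fintype m]
    [Fintype n] {V : Matrix n n 𝕜} (hV : V.PosSemidef) (A : Matrix n m 𝕜) (B : Matrix m p 𝕜) :
    Aᴴ * V * A * B = 0 ↔ V * A * B = 0 := by
  classical
  obtain ⟨C, rfl⟩ := CStarAlgebra.nonneg_iff_eq_star_mul_self.mp hV.nonneg
  rw [star_eq_conjTranspose]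
  refine ⟨fun h => ?_, fun h => by simp only [Matrix.mul_assoc] at h ⊢; rw [h, Matrix.mul_zero]⟩
  have hCAB : C * A * B = 0 := by
    rw [← conjTranspose_mul_self_mul_eq_zero]
    simpa only [conjTranspose_mul, Matrix.mul_assoc] using h
  simp only [Matrix.mul_assoc] at hCAB ⊢
  rw [hCAB, Matrix.mul_zero]

open scoped ComplexOrder in
theorem PosSemidef.mul_mul_mul_conjTranspose_mul_mul_eq {𝕜 : Type*} [RCLike 𝕜] [Fintype m]
    [Fintype n] {V : Matrix n n 𝕜} (hV : V.PosSemidef) {A : Matrix n m 𝕜}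
    {G : Matrix m m 𝕜} (hG : Aᴴ * V * A * G * (Aᴴ * V * A) = Aᴴ * V * A) :
    V * A * G * (Aᴴ * V * A) = V * A := by
  classical
  have h := (hV.conjTranspose_mul_mul_mul_eq_zero_iff A (1 - G * (Aᴴ * V * A))).mp
    (by rw [Matrix.mul_sub, Matrix.mul_one, ← Matrix.mul_assoc, hG, sub_self])
  rw [Matrix.mul_sub, Matrix.mul_one, sub_eq_zero] at h
  rw [Matrix.mul_assoc (V * A), ← h]

theorem PosSemidef.trace_mul_mul_transpose_le [Fintype m] [Fintype n] {V : Matrix n n ℝ}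
    (hV : V.PosSemidef) {K₀ K : Matrix m n ℝ} (h : K₀ * V * (K - K₀)ᵀ = 0) :
    (K₀ * V * K₀ᵀ).trace ≤ (K * V * Kᵀ).trace := by
  set D := K - K₀
  have hV_symm : Vᵀ = V := by
    simpa only [conjTranspose_eq_transpose_of_trivial] using hV.isHermitian.eq
  have h' : D * V * K₀ᵀ = 0 := by
    simpa only [transpose_mul, transpose_transpose, hV_symm, Matrix.mul_assoc, transpose_zero]
      using congrArg (·ᵀ) h
  have hK : K = K₀ + D := (add_sub_cancel K₀ K).symm
  have hD_nonneg : 0 ≤ (D * V * Dᵀ).trace := by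
    simpa only [conjTranspose_eq_transpose_of_trivial]
      using (hV.mul_mul_conjTranspose_same D).trace_nonneg
  calc (K₀ * V * K₀ᵀ).trace
      ≤ (K₀ * V * K₀ᵀ).trace + (D * V * Dᵀ).trace := le_add_of_nonneg_right hD_nonneg
    _ = (K * V * Kᵀ).trace := by
      rw [hK, transpose_add, Matrix.add_mul, Matrix.add_mul, Matrix.mul_add, Matrix.mul_add, h, h',
        trace_add, trace_add, trace_zero, add_zero, zero_add]

end Matrix

/-- BLUE: with `M = I − X X†` and `K̂ = X† (I − V₀ M (M V₀ M)† M)`, if `X` has full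
column rank then `K̂ X = I` and `K̂` minimizes `tr(K V₀ Kᵀ)` among all `K` with
`K X = I`. -/
theorem stmt7 {n d : ℕ} (X : Matrix (Fin n) (Fin d) ℝ) (hX : X.rank = d)
    (V₀ : Matrix (Fin n) (Fin n) ℝ) (hV₀ : V₀.PosSemidef)
    (Xd : Matrix (Fin d) (Fin n) ℝ) (hXd : IsMoorePenrose X Xd)
    (Q : Matrix (Fin n) (Fin n) ℝ)
    (hQ : IsMoorePenrose ((1 - X * Xd) * V₀ * (1 - X * Xd)) Q) :
    (Xd * (1 - V₀ * (1 - X * Xd) * Q * (1 - X * Xd))) * X = 1 ∧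
      ∀ K : Matrix (Fin d) (Fin n) ℝ, K * X = 1 →
        ((Xd * (1 - V₀ * (1 - X * Xd) * Q * (1 - X * Xd))) * V₀ *
            (Xd * (1 - V₀ * (1 - X * Xd) * Q * (1 - X * Xd)))ᵀ).trace ≤
          (K * V₀ * Kᵀ).trace := by
  obtain ⟨hXXdX, -, hXXd_symm, -⟩ := hXd
  set M := 1 - X * Xd
  set K₀ := Xd * (1 - V₀ * M * Q * M)
  have hM_symm : Mᵀ = M := by rw [transpose_sub, transpose_one, hXXd_symm]
  have hMX : M * X = 0 := by rw [Matrix.sub_mul, Matrix.one_mul, hXXdX, sub_self]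
  have hXdX : Xd * X = 1 :=
    mul_eq_one_of_mul_mul_eq_self_of_rank_eq_card (hX.trans (Fintype.card_fin d).symm) hXXdX
  have hK₀X : K₀ * X = 1 := by
    rw [Matrix.mul_assoc, Matrix.sub_mul, Matrix.one_mul, Matrix.mul_assoc _ M X, hMX,
      Matrix.mul_zero, sub_zero, hXdX]
  have hVMQW : V₀ * M * Q * (M * V₀ * M) = V₀ * M := by
    have h := hV₀.mul_mul_mul_conjTranspose_mul_mul_eq (A := M) (G := Q)
    rw [conjTranspose_eq_transpose_of_trivial, hM_symm] at h
    exact h hQ.1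
  have hK₀VM : K₀ * V₀ * M = 0 := by
    rw [Matrix.mul_assoc, Matrix.mul_assoc, Matrix.sub_mul, Matrix.one_mul,
      show V₀ * M * Q * M * (V₀ * M) = V₀ * M * Q * (M * V₀ * M) by simp only [Matrix.mul_assoc],
      hVMQW, sub_self, Matrix.mul_zero]
  refine ⟨hK₀X, fun K hKX => hV₀.trace_mul_mul_transpose_le ?_⟩
  have hDM : (K - K₀) * M = K - K₀ := by
    rw [Matrix.mul_sub, Matrix.mul_one, ← Matrix.mul_assoc, Matrix.sub_mul, hKX, hK₀X, sub_self,
      Matrix.zero_mul, sub_zero]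
  rw [← hDM, transpose_mul, hM_symm, ← Matrix.mul_assoc, hK₀VM, Matrix.zero_mul]
end

section
/- Let y ∈ ℝⁿ with y ≠ 0, X an n×d real matrix, D a d×d positive semidefinite real matrix, V an n×n positive semidefinite real matrix, and N = X D Xᵀ + V with y ∈ range(N). Define J(β; D, V) = (y − Xβ)ᵀ V† (y − Xβ) + βᵀ D† β + tr(N)/‖y‖₂² and β̂ = D Xᵀ N† y. Then the minimum of J(β; D, V) over the set Θ(D,V) = {β : y − Xβ ∈ range(V), β ∈ range(D)} is attained at β̂ and equals tr((y yᵀ − N)ᵀ N† (y yᵀ − N))/‖y‖₂² + 2. -/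
open Matrix

/-- `J(β; D, V) = (y − Xβ)ᵀ V† (y − Xβ) + βᵀ D† β + tr(N)/‖y‖₂²`. -/
noncomputable def Jcost {n d : ℕ} (y : Fin n → ℝ) (X : Matrix (Fin n) (Fin d) ℝ)
    (D : Matrix (Fin d) (Fin d) ℝ) (V : Matrix (Fin n) (Fin n) ℝ)
    (Dd : Matrix (Fin d) (Fin d) ℝ) (Vd : Matrix (Fin n) (Fin n) ℝ)
    (β : Fin d → ℝ) : ℝ :=
  (y - X.mulVec β) ⬝ᵥ Vd.mulVec (y - X.mulVec β) + β ⬝ᵥ Dd.mulVec β +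
    (X * D * Xᵀ + V).trace / (y ⬝ᵥ y)

/-!
With `p = N† y` one has `N p = y`, because `y ∈ range N` and `N N† N = N`; hence `β̂ = D (Xᵀ p)` and
`y − X β̂ = V p`, so `β̂ ∈ Θ`. Writing a point of `Θ` as `y − X β = V u`, `β = D w`, the identities
`V V† V = V` and `D D† D = D` reduce `J` to `uᵀ V u + wᵀ D w + tr N / ‖y‖²`. Completing the square
in the seminorms of `V` and `D` against `p` and `Xᵀ p` gives
`uᵀ V u + wᵀ D w ≥ 2 pᵀ (V u + X D w) − pᵀ N p = pᵀ y`, with equality at `u = p`, `w = Xᵀ p`.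
The value of the minimum follows by expanding the trace, using `N N† y yᵀ = y yᵀ = y yᵀ N† N`.
-/

namespace Matrix

variable {m n R : Type*}

theorem PosSemidef.transpose_eq {M : Matrix n n ℝ} (hM : M.PosSemidef) : Mᵀ = M :=
  (isHermitian_iff_isSymm.mp hM.isHermitian).eq

variable [Fintype m] [Fintype n]

section CommRing

variable [CommRing R]

theorem mulVec_mulVec_eq_of_mul_mul_eq_self {A : Matrix m n R} {B : Matrix n m R}
    (hAB : A * B * A = A) {y : m → R} (hy : y ∈ Set.range A.mulVec) : A *ᵥ (B *ᵥ y) = y := by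
  obtain ⟨z, rfl⟩ := hy
  rw [mulVec_mulVec, mulVec_mulVec, hAB]

theorem vecMul_vecMul_eq_of_mul_mul_eq_self {A B : Matrix n n R} (hA : Aᵀ = A)
    (hAB : A * B * A = A) {y : n → R} (hy : y ∈ Set.range A.mulVec) : y ᵥ* B ᵥ* A = y := by
  obtain ⟨z, rfl⟩ := hy
  rw [← vecMul_transpose, hA, vecMul_vecMul, vecMul_vecMul, ← Matrix.mul_assoc, hAB]

theorem dotProduct_mulVec_mulVec_eq_of_mul_mul_eq_self {A B : Matrix n n R} (hA : Aᵀ = A)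
    (hAB : A * B * A = A) (u : n → R) : A *ᵥ u ⬝ᵥ B *ᵥ (A *ᵥ u) = u ⬝ᵥ A *ᵥ u := by
  rw [dotProduct_comm, dotProduct_mulVec, ← mulVec_transpose, hA, mulVec_mulVec,
    mulVec_mulVec, hAB, dotProduct_comm]

theorem trace_transpose_vecMulVec_sub_mul_mul_sub {N G : Matrix n n R} (hN : Nᵀ = N)
    (hNG : N * G * N = N) {y : n → R} (hy : y ∈ Set.range N.mulVec) :
    ((vecMulVec y y - N)ᵀ * G * (vecMulVec y y - N)).trace =
      (y ⬝ᵥ G *ᵥ y) * (y ⬝ᵥ y) - 2 * (y ⬝ᵥ y) + N.trace := by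
  have hleft : N * G * vecMulVec y y = vecMulVec y y := by
    rw [mul_vecMulVec, ← mulVec_mulVec, mulVec_mulVec_eq_of_mul_mul_eq_self hNG hy]
  have hright : vecMulVec y y * G * N = vecMulVec y y := by
    rw [vecMulVec_mul, vecMulVec_mul, vecMul_vecMul_eq_of_mul_mul_eq_self hN hNG hy]
  have hexpand : (vecMulVec y y - N) * G * (vecMulVec y y - N) =
      vecMulVec y y * G * vecMulVec y y - vecMulVec y y * G * N - N * G * vecMulVec y y +
        N * G * N := by
    noncomm_ring
  rw [transpose_sub, transpose_vecMulVec, hN, hexpand, hleft, hright, hNG, trace_add,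
    trace_sub, trace_sub, vecMulVec_mul, vecMulVec_mul_vecMulVec, trace_vecMulVec,
    trace_vecMulVec, dotProduct_smul, smul_eq_mul, dotProduct_mulVec]
  ring

theorem dotProduct_mul_mul_transpose_add_mulVec (X : Matrix m n R) (D : Matrix n n R)
    (V : Matrix m m R) (p : m → R) :
    p ⬝ᵥ (X * D * Xᵀ + V) *ᵥ p = Xᵀ *ᵥ p ⬝ᵥ D *ᵥ (Xᵀ *ᵥ p) + p ⬝ᵥ V *ᵥ p := by
  rw [add_mulVec, dotProduct_add, mulVec_transpose, ← dotProduct_mulVec, ← mulVec_mulVec,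
    ← mulVec_mulVec, mulVec_transpose]

end CommRing

theorem PosSemidef.two_mul_dotProduct_mulVec_le {M : Matrix n n ℝ} (hM : M.PosSemidef)
    (a b : n → ℝ) : 2 * (a ⬝ᵥ M *ᵥ b) ≤ a ⬝ᵥ M *ᵥ a + b ⬝ᵥ M *ᵥ b := by
  have hsq := hM.dotProduct_mulVec_nonneg (a - b)
  have hsymm : b ⬝ᵥ M *ᵥ a = a ⬝ᵥ M *ᵥ b := by
    rw [dotProduct_mulVec, ← mulVec_transpose, dotProduct_comm, hM.transpose_eq]
  simp only [star_trivial, mulVec_sub, dotProduct_sub, sub_dotProduct, hsymm] at hsq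
  linarith

theorem dotProduct_le_of_mul_mul_transpose_add_mulVec_eq {k : Type*} [Fintype k]
    {X : Matrix m k ℝ} {D : Matrix k k ℝ} {V : Matrix m m ℝ} (hD : D.PosSemidef)
    (hV : V.PosSemidef) {y p u : m → ℝ} {w : k → ℝ} (hp : (X * D * Xᵀ + V) *ᵥ p = y)
    (hu : V *ᵥ u = y - X *ᵥ (D *ᵥ w)) :
    p ⬝ᵥ y ≤ u ⬝ᵥ V *ᵥ u + w ⬝ᵥ D *ᵥ w := by
  have hVpu := hV.two_mul_dotProduct_mulVec_le p u
  have hDpw := hD.two_mul_dotProduct_mulVec_le (Xᵀ *ᵥ p) w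
  have hDw : Xᵀ *ᵥ p ⬝ᵥ D *ᵥ w = p ⬝ᵥ X *ᵥ (D *ᵥ w) := by
    rw [mulVec_transpose, ← dotProduct_mulVec]
  have hVu : p ⬝ᵥ V *ᵥ u = p ⬝ᵥ y - p ⬝ᵥ X *ᵥ (D *ᵥ w) := by rw [hu, dotProduct_sub]
  have hNp : p ⬝ᵥ y = Xᵀ *ᵥ p ⬝ᵥ D *ᵥ (Xᵀ *ᵥ p) + p ⬝ᵥ V *ᵥ p := by
    rw [← hp, dotProduct_mul_mul_transpose_add_mulVec]
  linarith

end Matrix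

theorem Jcost_eq_of_mulVec_eq {n d : ℕ} {y : Fin n → ℝ} {X : Matrix (Fin n) (Fin d) ℝ}
    {D Dd : Matrix (Fin d) (Fin d) ℝ} {V Vd : Matrix (Fin n) (Fin n) ℝ} {β : Fin d → ℝ}
    {u : Fin n → ℝ} {w : Fin d → ℝ} (hD : Dᵀ = D) (hV : Vᵀ = V) (hDd : D * Dd * D = D)
    (hVd : V * Vd * V = V) (hu : V *ᵥ u = y - X *ᵥ β) (hw : D *ᵥ w = β) :
    Jcost y X D V Dd Vd β = u ⬝ᵥ V *ᵥ u + w ⬝ᵥ D *ᵥ w + (X * D * Xᵀ + V).trace / (y ⬝ᵥ y) := by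
  rw [Jcost, ← hu, ← hw, dotProduct_mulVec_mulVec_eq_of_mul_mul_eq_self hV hVd,
    dotProduct_mulVec_mulVec_eq_of_mul_mul_eq_self hD hDd]

/-- The minimum of `J(β; D, V)` over `Θ(D,V)` is attained at `β̂ = D Xᵀ N† y`
and equals `‖y yᵀ − N‖²_{N†} / ‖y‖₂² + 2`. -/
theorem stmt8 {n d : ℕ} (y : Fin n → ℝ) (hy0 : y ≠ 0)
    (X : Matrix (Fin n) (Fin d) ℝ)
    (D : Matrix (Fin d) (Fin d) ℝ) (V : Matrix (Fin n) (Fin n) ℝ)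
    (hD : D.PosSemidef) (hV : V.PosSemidef)
    (Dd : Matrix (Fin d) (Fin d) ℝ) (hDd : IsMoorePenrose D Dd)
    (Vd : Matrix (Fin n) (Fin n) ℝ) (hVd : IsMoorePenrose V Vd)
    (Nd : Matrix (Fin n) (Fin n) ℝ) (hNd : IsMoorePenrose (X * D * Xᵀ + V) Nd)
    (hy : y ∈ Set.range (X * D * Xᵀ + V).mulVec) :
    (D * Xᵀ * Nd).mulVec y ∈
      {β : Fin d → ℝ | y - X.mulVec β ∈ Set.range V.mulVec ∧ β ∈ Set.range D.mulVec} ∧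
    (∀ β ∈ {β : Fin d → ℝ |
        y - X.mulVec β ∈ Set.range V.mulVec ∧ β ∈ Set.range D.mulVec},
      Jcost y X D V Dd Vd ((D * Xᵀ * Nd).mulVec y) ≤ Jcost y X D V Dd Vd β) ∧
    Jcost y X D V Dd Vd ((D * Xᵀ * Nd).mulVec y) =
      ((vecMulVec y y - (X * D * Xᵀ + V))ᵀ * Nd *
          (vecMulVec y y - (X * D * Xᵀ + V))).trace / (y ⬝ᵥ y) + 2 := by
  have hNt : (X * D * Xᵀ + V)ᵀ = X * D * Xᵀ + V := by
    rw [transpose_add, transpose_mul, transpose_mul, transpose_transpose, hD.transpose_eq,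
      hV.transpose_eq, Matrix.mul_assoc]
  set p := Nd *ᵥ y with hp_def
  have hp : (X * D * Xᵀ + V) *ᵥ p = y := mulVec_mulVec_eq_of_mul_mul_eq_self hNd.1 hy
  have hβ : (D * Xᵀ * Nd) *ᵥ y = D *ᵥ (Xᵀ *ᵥ p) := by
    simp only [p, mulVec_mulVec, Matrix.mul_assoc]
  clear_value p
  have hres : V *ᵥ p = y - X *ᵥ (D *ᵥ (Xᵀ *ᵥ p)) := by
    rw [← hp, add_mulVec, ← mulVec_mulVec, ← mulVec_mulVec, add_sub_cancel_left]
  have hJ : Jcost y X D V Dd Vd (D *ᵥ (Xᵀ *ᵥ p)) =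
      p ⬝ᵥ y + (X * D * Xᵀ + V).trace / (y ⬝ᵥ y) := by
    rw [Jcost_eq_of_mulVec_eq hD.transpose_eq hV.transpose_eq hDd.1 hVd.1 hres rfl,
      add_comm (p ⬝ᵥ V *ᵥ p), ← dotProduct_mul_mul_transpose_add_mulVec, hp]
  rw [hβ]
  refine ⟨⟨⟨p, hres⟩, ⟨Xᵀ *ᵥ p, rfl⟩⟩, ?_, ?_⟩
  · rintro β ⟨⟨u, hu⟩, ⟨w, rfl⟩⟩
    rw [hJ, Jcost_eq_of_mulVec_eq hD.transpose_eq hV.transpose_eq hDd.1 hVd.1 hu rfl]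
    gcongr
    exact dotProduct_le_of_mul_mul_transpose_add_mulVec_eq hD hV hp hu
  · have hyy : y ⬝ᵥ y ≠ 0 := fun h => hy0 (dotProduct_self_eq_zero.mp h)
    rw [hJ, trace_transpose_vecMulVec_sub_mul_mul_sub hNt hNd.1 hy, ← hp_def,
      dotProduct_comm p y]
    field_simp
    ring
end

section
/- Let y ∈ ℝⁿ with y ≠ 0, x ∈ ℝᵐ, and W an m×m positive semidefinite real matrix with diagonal entries w₁₁, …, w_mm. Then the infimum, over all diagonal matrices A = diag(a₁, …, a_m) with aᵢ ≥ 0 and x ∈ range(A), of xᵀ A† x + tr(W A)/‖y‖₂² equals (2/‖y‖₂) Σᵢ √(wᵢᵢ) |xᵢ|. If moreover wᵢᵢ > 0 for every index i with xᵢ ≠ 0, the infimum is attained at Â = diag(â₁, …, â_m) with âᵢ = ‖y‖₂ |xᵢ| / √(wᵢᵢ) when wᵢᵢ > 0 and âᵢ = 0 otherwise. -/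
/-!
Both `xᵀ diag(a)† x` and `tr(W diag(a))` only see the diagonal, so the problem decouples into the
scalar problems `inf_{a ≥ 0} xᵢ² / a + wᵢᵢ a / ‖y‖²`, where `a = 0` is admissible only if `xᵢ = 0`.
By AM–GM each is at least `2 √wᵢᵢ |xᵢ| / ‖y‖`, with equality at `a = ‖y‖ |xᵢ| / √wᵢᵢ` when
`wᵢᵢ > 0`. When `wᵢᵢ = 0 ≠ xᵢ` the value `xᵢ² / a` only tends to the bound `0` as `a → ∞`, which
is why the infimum need not be attained.
-/

open Matrix Filter Topology

section DiagonalMatrix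

variable {ι K : Type*} [Fintype ι] [DecidableEq ι] [Field K]

theorem mem_range_mulVec_diagonal_iff {a x : ι → K} :
    x ∈ Set.range (diagonal a).mulVec ↔ ∀ i, a i = 0 → x i = 0 := by
  constructor
  · rintro ⟨v, rfl⟩ i hi
    simp [mulVec_diagonal, hi]
  · intro h
    refine ⟨fun i => (a i)⁻¹ * x i, funext fun i => ?_⟩
    rcases eq_or_ne (a i) 0 with h0 | h0
    · simp [mulVec_diagonal, h0, h i h0]
    · simp [mulVec_diagonal, mul_inv_cancel_left₀ h0]

theorem dotProduct_diagonal_inv_mulVec_add_trace_mul_diagonal_div (a x : ι → K)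
    (W : Matrix ι ι K) (N : K) :
    x ⬝ᵥ (diagonal fun i => (a i)⁻¹) *ᵥ x + (W * diagonal a).trace / N =
      ∑ i, (x i ^ 2 / a i + W i i * a i / N) := by
  simp only [dotProduct, mulVec_diagonal, trace, diag, mul_diagonal, Finset.sum_add_distrib,
    Finset.sum_div]
  congr 1
  exact Finset.sum_congr rfl fun i _ => by ring

end DiagonalMatrix

section Scalar

variable {N w x t : ℝ}

theorem two_div_sqrt_mul_le_sq_div_add (hw : 0 ≤ w) (hN : 0 < N) {a : ℝ} (ha : 0 ≤ a)
    (hxa : a = 0 → x = 0) : 2 / √N * (√w * |x|) ≤ x ^ 2 / a + w * a / N := by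
  rcases ha.eq_or_lt with rfl | ha
  · simp [hxa rfl]
  obtain ⟨s, hs, rfl⟩ : ∃ s, 0 < s ∧ N = s ^ 2 := ⟨√N, by positivity, (Real.sq_sqrt hN.le).symm⟩
  obtain ⟨r, hr, rfl⟩ : ∃ r, 0 ≤ r ∧ w = r ^ 2 := ⟨√w, by positivity, (Real.sq_sqrt hw).symm⟩
  rw [Real.sqrt_sq hs.le, Real.sqrt_sq hr, ← sq_abs x, div_add_div _ _ ha.ne' (by positivity),
    div_mul_eq_mul_div, div_le_div_iff₀ hs (by positivity)]
  nlinarith [mul_nonneg hs.le (sq_nonneg (|x| * s - r * a))]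

/-- For `0 < w` this is the minimiser `√N |x| / √w` of `a ↦ x² / a + w a / N` on `a > 0`;
for `w = 0` there is none and the fallback `t` is used (`t = 0` for the attained value,
`t → ∞` to approach the infimum). -/
noncomputable def optWeight (N w x t : ℝ) : ℝ :=
  if 0 < w then √N * |x| / √w else t

theorem optWeight_nonneg (ht : 0 ≤ t) : 0 ≤ optWeight N w x t := by
  unfold optWeight
  split_ifs <;> positivity

theorem eq_zero_of_optWeight_eq_zero (hN : 0 < N) (hwt : x ≠ 0 → 0 < w ∨ t ≠ 0)
    (h : optWeight N w x t = 0) : x = 0 := by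
  by_contra hx
  unfold optWeight at h
  split_ifs at h with hw
  · have : 0 < √N * |x| / √w := by positivity
    exact this.ne' h
  · exact (hwt hx).elim hw (· h)

theorem sq_div_optWeight_add_of_pos (hN : 0 < N) (hw : 0 < w) :
    x ^ 2 / optWeight N w x t + w * optWeight N w x t / N = 2 / √N * (√w * |x|) := by
  rw [optWeight, if_pos hw]
  obtain ⟨s, hs, rfl⟩ : ∃ s, 0 < s ∧ N = s ^ 2 := ⟨√N, by positivity, (Real.sq_sqrt hN.le).symm⟩
  obtain ⟨r, hr, rfl⟩ : ∃ r, 0 < r ∧ w = r ^ 2 := ⟨√w, by positivity, (Real.sq_sqrt hw.le).symm⟩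
  rw [Real.sqrt_sq hs.le, Real.sqrt_sq hr.le, ← sq_abs x]
  field_simp
  ring

theorem sq_div_optWeight_add_le (hN : 0 < N) (hw : 0 ≤ w) (ht : 0 ≤ t) :
    x ^ 2 / optWeight N w x t + w * optWeight N w x t / N ≤ 2 / √N * (√w * |x|) + x ^ 2 / t := by
  rcases hw.eq_or_lt with rfl | hw
  · simp [optWeight]
  · rw [sq_div_optWeight_add_of_pos hN hw]
    have := div_nonneg (sq_nonneg x) ht
    linarith

-- At `w = 0` both sides vanish, the left one because `x ^ 2 / 0 = 0`.
theorem sq_div_optWeight_zero_add (hN : 0 < N) (hw : 0 ≤ w) :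
    x ^ 2 / optWeight N w x 0 + w * optWeight N w x 0 / N = 2 / √N * (√w * |x|) := by
  rcases hw.eq_or_lt with rfl | hw
  · simp [optWeight]
  · exact sq_div_optWeight_add_of_pos hN hw

end Scalar

section WeightedSum

variable {ι : Type*} [Fintype ι] {N : ℝ} {w x : ι → ℝ}

theorem sInf_sum_sq_div_add_mul_div (hN : 0 < N) (hw : ∀ i, 0 ≤ w i) :
    sInf {r : ℝ | ∃ a : ι → ℝ, (∀ i, 0 ≤ a i) ∧ (∀ i, a i = 0 → x i = 0) ∧
        r = ∑ i, (x i ^ 2 / a i + w i * a i / N)} =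
      2 / √N * ∑ i, √(w i) * |x i| := by
  set S := {r : ℝ | ∃ a : ι → ℝ, (∀ i, 0 ≤ a i) ∧ (∀ i, a i = 0 → x i = 0) ∧
        r = ∑ i, (x i ^ 2 / a i + w i * a i / N)}
  set bound := 2 / √N * ∑ i, √(w i) * |x i| with hbound
  have lower : ∀ r ∈ S, bound ≤ r := by
    rintro r ⟨a, ha, hxa, rfl⟩
    rw [hbound, Finset.mul_sum]
    exact Finset.sum_le_sum fun i _ => two_div_sqrt_mul_le_sq_div_add (hw i) hN (ha i) (hxa i)
  have near : ∀ t > 0, ∃ r ∈ S, r ≤ bound + (∑ i, x i ^ 2) / t := fun t ht =>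
    ⟨_, ⟨fun i => optWeight N (w i) (x i) t, fun i => optWeight_nonneg ht.le,
      fun i => eq_zero_of_optWeight_eq_zero hN fun _ => Or.inr ht.ne', rfl⟩, by
      rw [hbound, Finset.mul_sum, Finset.sum_div, ← Finset.sum_add_distrib]
      exact Finset.sum_le_sum fun i _ => sq_div_optWeight_add_le hN (hw i) ht.le⟩
  refine le_antisymm ?_ (le_csInf ?_ lower)
  · have hlim : Tendsto (fun t => bound + (∑ i, x i ^ 2) / t) atTop (𝓝 bound) := by
      simpa using (tendsto_const_nhds (x := bound)).add
        ((tendsto_const_nhds (x := ∑ i, x i ^ 2)).div_atTop tendsto_id)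
    refine ge_of_tendsto hlim ((eventually_gt_atTop 0).mono fun t ht => ?_)
    obtain ⟨r, hr, hle⟩ := near t ht
    exact (csInf_le ⟨_, lower⟩ hr).trans hle
  · obtain ⟨r, hr, -⟩ := near 1 one_pos
    exact ⟨r, hr⟩

end WeightedSum

/-- The infimum, over diagonal `A = diag(a)` with nonnegative entries and
`x ∈ range(A)`, of `xᵀ A† x + tr(W A)/‖y‖₂²` equals `(2/‖y‖₂) Σᵢ √(wᵢᵢ)|xᵢ|`;
if `wᵢᵢ > 0` whenever `xᵢ ≠ 0`, it is attained at `âᵢ = ‖y‖₂|xᵢ|/√(wᵢᵢ)`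
(`âᵢ = 0` when `wᵢᵢ = 0`). Note `A† = diag(a₁†,…,a_m†)` with `0† = 0`. -/
theorem stmt13 {n m : ℕ} (y : Fin n → ℝ) (hy0 : y ≠ 0) (x : Fin m → ℝ)
    (W : Matrix (Fin m) (Fin m) ℝ) (hW : W.PosSemidef) :
    sInf {r : ℝ | ∃ a : Fin m → ℝ, (∀ i, 0 ≤ a i) ∧
        x ∈ Set.range (Matrix.diagonal a).mulVec ∧
        r = x ⬝ᵥ (Matrix.diagonal fun i => (a i)⁻¹).mulVec x +
          (W * Matrix.diagonal a).trace / (y ⬝ᵥ y)} =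
      2 / Real.sqrt (y ⬝ᵥ y) * ∑ i, Real.sqrt (W i i) * |x i| ∧
    ((∀ i, x i ≠ 0 → 0 < W i i) →
      (∀ i, 0 ≤ (fun i => if 0 < W i i then
          Real.sqrt (y ⬝ᵥ y) * |x i| / Real.sqrt (W i i) else 0) i) ∧
      x ∈ Set.range (Matrix.diagonal fun i => if 0 < W i i then
          Real.sqrt (y ⬝ᵥ y) * |x i| / Real.sqrt (W i i) else 0).mulVec ∧
      x ⬝ᵥ (Matrix.diagonal fun i => ((if 0 < W i i then
            Real.sqrt (y ⬝ᵥ y) * |x i| / Real.sqrt (W i i) else 0))⁻¹).mulVec x +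
          (W * Matrix.diagonal (fun i => if 0 < W i i then
            Real.sqrt (y ⬝ᵥ y) * |x i| / Real.sqrt (W i i) else 0)).trace / (y ⬝ᵥ y) =
        2 / Real.sqrt (y ⬝ᵥ y) * ∑ i, Real.sqrt (W i i) * |x i|) := by
  have hN : 0 < y ⬝ᵥ y := (Finset.sum_nonneg fun i _ => mul_self_nonneg (y i)).lt_of_ne'
    (dotProduct_self_eq_zero.not.2 hy0)
  have hWdiag : ∀ i, 0 ≤ W i i := fun i => hW.diag_nonneg
  simp only [dotProduct_diagonal_inv_mulVec_add_trace_mul_diagonal_div,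
    mem_range_mulVec_diagonal_iff]
  refine ⟨sInf_sum_sq_div_add_mul_div hN hWdiag, fun hwx => ⟨fun i => optWeight_nonneg le_rfl,
    fun i => eq_zero_of_optWeight_eq_zero hN fun hx => Or.inl (hwx i hx), ?_⟩⟩
  rw [Finset.mul_sum]
  exact Finset.sum_congr rfl fun i _ => sq_div_optWeight_zero_add hN (hWdiag i)
end

section
/- Let y ∈ ℝⁿ with y ≠ 0, x ∈ ℝᵐ, and W, A m×m positive semidefinite real matrices with x ∈ range(A). Then xᵀ A† x + tr(W A)/‖y‖₂² ≥ (2/‖y‖₂) √(xᵀ W x). -/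
/-!
Write `x = A u`. Since `A A† A = A`, the quadratic form `xᵀ A† x` equals `uᵀ A u`. Cauchy–Schwarz
for the semi-inner product `⟨z, w⟩ = zᵀ A w` says `(A u)(A u)ᵀ ≤ (uᵀ A u) A` in the Loewner order,
and pairing both sides with `W` under the trace (which is monotone because `tr (W M) ≥ 0` for
`W, M ⪰ 0`) gives `xᵀ W x ≤ (xᵀ A† x) · tr (W A)`. AM–GM, `2 √a √(t/s) ≤ a + t/s`, finishes.
-/

open Matrix

open scoped MatrixOrder ComplexOrder

namespace Matrix

variable {n 𝕜 : Type*} [Fintype n] [RCLike 𝕜]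

theorem PosSemidef.trace_mul_nonneg {W M : Matrix n n 𝕜} (hW : W.PosSemidef)
    (hM : M.PosSemidef) : 0 ≤ (W * M).trace := by
  classical
  have h := (hM.conjTranspose_mul_mul_same (CFC.sqrt W)).trace_nonneg
  rwa [(CFC.sqrt_nonneg W).posSemidef.isHermitian.eq, trace_mul_comm, ← mul_assoc,
    CFC.sqrt_mul_sqrt_self W hW.nonneg] at h

theorem PosSemidef.smul_sub_vecMulVec_mulVec {A : Matrix n n ℝ} (hA : A.PosSemidef)
    (u : n → ℝ) :
    ((u ⬝ᵥ A *ᵥ u) • A - vecMulVec (A *ᵥ u) (A *ᵥ u)).PosSemidef := by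
  classical
  refine .of_dotProduct_mulVec_nonneg ((hA.isHermitian.smul (.all _)).sub
    (by simpa using (posSemidef_vecMulVec_self_star (A *ᵥ u)).isHermitian)) fun z => ?_
  have hcs := (toBilin' A).apply_mul_apply_le_of_forall_zero_le
    (fun v => by simpa [toBilin'_apply'] using hA.dotProduct_mulVec_nonneg v) z u
  have hsymm : u ⬝ᵥ A *ᵥ z = z ⬝ᵥ A *ᵥ u := by
    rw [← dotProduct_transpose_mulVec, ← conjTranspose_eq_transpose_of_trivial, hA.isHermitian.eq]
  simp only [toBilin'_apply', hsymm] at hcs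
  simp only [star_trivial, sub_mulVec, smul_mulVec, vecMulVec_mulVec, dotProduct_sub,
    dotProduct_smul, smul_eq_mul, MulOpposite.smul_eq_mul_unop, MulOpposite.unop_op]
  rw [dotProduct_comm (A *ᵥ u) z]
  linarith

theorem PosSemidef.dotProduct_mulVec_le_mul_trace {A W : Matrix n n ℝ} (hA : A.PosSemidef)
    (hW : W.PosSemidef) (u : n → ℝ) :
    A *ᵥ u ⬝ᵥ W *ᵥ (A *ᵥ u) ≤ (u ⬝ᵥ A *ᵥ u) * (W * A).trace := by
  have h := hW.trace_mul_nonneg (hA.smul_sub_vecMulVec_mulVec u)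
  rw [mul_sub, trace_sub, Matrix.mul_smul, trace_smul, smul_eq_mul, mul_vecMulVec, trace_vecMulVec,
    dotProduct_comm (W *ᵥ _)] at h
  linarith

theorem dotProduct_mulVec_of_mul_mul_eq_self {R : Type*} [CommSemiring R]
    {A B : Matrix n n R} (hA : Aᵀ = A) (hB : A * B * A = A) (u : n → R) :
    A *ᵥ u ⬝ᵥ B *ᵥ (A *ᵥ u) = u ⬝ᵥ A *ᵥ u := by
  rw [dotProduct_comm, ← dotProduct_transpose_mulVec, hA, mulVec_mulVec, mulVec_mulVec, hB]

end Matrix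

theorem two_div_sqrt_mul_sqrt_le {a t s q : ℝ} (ha : 0 ≤ a) (ht : 0 ≤ t) (hs : 0 ≤ s)
    (hq : q ≤ a * t) : 2 / √s * √q ≤ a + t / s := by
  calc 2 / √s * √q ≤ 2 / √s * √(a * t) := by gcongr
    _ = 2 * √a * √(t / s) := by rw [Real.sqrt_mul ha, Real.sqrt_div' _ hs]; ring
    _ ≤ √a ^ 2 + √(t / s) ^ 2 := two_mul_le_add_sq _ _
    _ = a + t / s := by rw [Real.sq_sqrt ha, Real.sq_sqrt (by positivity)]

theorem stmt14_general {n m : ℕ} (y : Fin n → ℝ) (x : Fin m → ℝ)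
    (W A : Matrix (Fin m) (Fin m) ℝ) (hW : W.PosSemidef) (hA : A.PosSemidef)
    (Ad : Matrix (Fin m) (Fin m) ℝ) (hAd : IsMoorePenrose A Ad)
    (hx : x ∈ Set.range A.mulVec) :
    2 / Real.sqrt (y ⬝ᵥ y) * Real.sqrt (x ⬝ᵥ W.mulVec x) ≤
      x ⬝ᵥ Ad.mulVec x + (W * A).trace / (y ⬝ᵥ y) := by
  obtain ⟨u, rfl⟩ := hx
  have hAt : Aᵀ = A := by simpa using hA.isHermitian.eq
  rw [dotProduct_mulVec_of_mul_mul_eq_self hAt hAd.1]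
  exact two_div_sqrt_mul_sqrt_le (by simpa using hA.dotProduct_mulVec_nonneg u)
    (hW.trace_mul_nonneg hA) (by simpa using dotProduct_self_star_nonneg y)
    (hA.dotProduct_mulVec_le_mul_trace hW u)

/-- For PSD `W, A` with `x ∈ range(A)`:
`xᵀ A† x + tr(W A)/‖y‖₂² ≥ (2/‖y‖₂) √(xᵀ W x)`. -/
theorem stmt14 {n m : ℕ} (y : Fin n → ℝ) (hy0 : y ≠ 0) (x : Fin m → ℝ)
    (W A : Matrix (Fin m) (Fin m) ℝ) (hW : W.PosSemidef) (hA : A.PosSemidef)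
    (Ad : Matrix (Fin m) (Fin m) ℝ) (hAd : IsMoorePenrose A Ad)
    (hx : x ∈ Set.range A.mulVec) :
    2 / Real.sqrt (y ⬝ᵥ y) * Real.sqrt (x ⬝ᵥ W.mulVec x) ≤
      x ⬝ᵥ Ad.mulVec x + (W * A).trace / (y ⬝ᵥ y) :=
  stmt14_general y x W A hW hA Ad hAd hx
end

section
/- Let y ∈ ℝⁿ with y ≠ 0, X an n×d real matrix, and suppose β_LS ∈ ℝᵈ satisfies X β_LS = y. Set D* = β_LS β_LSᵀ, V* = 0, and N* = X D* Xᵀ + V*. Then N* = y yᵀ, the covariance-fitting criterion satisfies tr((y yᵀ − N*)ᵀ N*† (y yᵀ − N*)) = 0, and the corresponding estimate satisfies D* Xᵀ N*† y = β_LS. -/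
open Matrix

/-!
With `X β_LS = y` the model covariance `X β_LS β_LSᵀ Xᵀ` is exactly `y yᵀ`, so the residual of
the criterion vanishes. For any `N†` with `y yᵀ N† y yᵀ = y yᵀ`, the left side equals
`(yᵀ N† y) • y yᵀ`, which forces `yᵀ N† y = 1` when `y ≠ 0`; since `D* Xᵀ = β_LS yᵀ`, the
estimate is then `β_LS (yᵀ N† y) = β_LS`.
-/

namespace Matrix

variable {l m n : Type*}

theorem vecMulVec_mul_transpose [Fintype m] {R : Type*} [CommSemiring R] (x : n → R)
    (y : m → R) (X : Matrix l m R) : vecMulVec x y * Xᵀ = vecMulVec x (X *ᵥ y) := by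
  rw [vecMulVec_mul, vecMul_transpose]

theorem mul_vecMulVec_self_mul_transpose [Fintype m] {R : Type*} [CommSemiring R]
    (X : Matrix l m R) (a : m → R) : X * vecMulVec a a * Xᵀ = vecMulVec (X *ᵥ a) (X *ᵥ a) := by
  rw [mul_vecMulVec, vecMulVec_mul_transpose]

theorem vecMulVec_mul_mul_vecMulVec [Fintype l] [Fintype m] {R : Type*} [CommSemiring R]
    (x : l → R) (y : m → R) (B : Matrix m l R) :
    vecMulVec x y * B * vecMulVec x y = (y ⬝ᵥ B *ᵥ x) • vecMulVec x y := by
  rw [vecMulVec_mul, vecMulVec_mul_vecMulVec, vecMulVec_smul, ← dotProduct_mulVec]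

theorem dotProduct_mulVec_eq_one_of_vecMulVec_mul_mul [Fintype m] [Fintype n] {K : Type*}
    [Field K] {x : n → K} {y : m → K} (hx : x ≠ 0) (hy : y ≠ 0) {B : Matrix m n K}
    (hB : vecMulVec x y * B * vecMulVec x y = vecMulVec x y) : y ⬝ᵥ B *ᵥ x = 1 := by
  have hxy : vecMulVec x y ≠ 0 := by
    obtain ⟨i, hi⟩ := Function.ne_iff.mp hx
    obtain ⟨j, hj⟩ := Function.ne_iff.mp hy
    exact fun h => mul_ne_zero hi hj congr($h i j)
  rw [vecMulVec_mul_mul_vecMulVec] at hB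
  exact smul_left_injective K hxy (hB.trans (one_smul K _).symm)

theorem vecMulVec_mul_mulVec_eq_self [Fintype n] {K : Type*} [Field K] (β : l → K) {y : n → K}
    (hy : y ≠ 0) {B : Matrix n n K} (hB : vecMulVec y y * B * vecMulVec y y = vecMulVec y y) :
    (vecMulVec β y * B) *ᵥ y = β := by
  rw [vecMulVec_mul, vecMulVec_mulVec, ← dotProduct_mulVec,
    dotProduct_mulVec_eq_one_of_vecMulVec_mul_mul hy hy hB, MulOpposite.op_one, one_smul]

end Matrix

/-- If `X β_LS = y`, then with `D* = β_LS β_LSᵀ`, `V* = 0`, `N* = X D* Xᵀ + V*`: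
`N* = y yᵀ`, the SPICE criterion is zero, and `D* Xᵀ N*† y = β_LS`. -/
theorem stmt16 {n d : ℕ} (y : Fin n → ℝ) (hy0 : y ≠ 0)
    (X : Matrix (Fin n) (Fin d) ℝ) (βLS : Fin d → ℝ)
    (hLS : X.mulVec βLS = y) :
    X * vecMulVec βLS βLS * Xᵀ + 0 = vecMulVec y y ∧
    (∀ Nd : Matrix (Fin n) (Fin n) ℝ,
      IsMoorePenrose (X * vecMulVec βLS βLS * Xᵀ + 0) Nd →
        ((vecMulVec y y - (X * vecMulVec βLS βLS * Xᵀ + 0))ᵀ * Nd *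
            (vecMulVec y y - (X * vecMulVec βLS βLS * Xᵀ + 0))).trace = 0 ∧
        (vecMulVec βLS βLS * Xᵀ * Nd).mulVec y = βLS) := by
  have hN : X * vecMulVec βLS βLS * Xᵀ + 0 = vecMulVec y y := by
    rw [add_zero, mul_vecMulVec_self_mul_transpose, hLS]
  refine ⟨hN, fun Nd hMP => ?_⟩
  rw [hN] at hMP ⊢
  refine ⟨by simp, ?_⟩
  rw [vecMulVec_mul_transpose, hLS]
  exact vecMulVec_mul_mulVec_eq_self βLS hy0 hMP.1
end

section
/- Let y ∈ ℝⁿ with y ≠ 0, X a nonzero n×d real matrix, and β ∈ ℝᵈ. Then the infimum, over all pairs (c, v) of nonnegative reals such that y − Xβ ∈ range(v I_n) and β ∈ range(c I_d), of (y − Xβ)ᵀ (v I)† (y − Xβ) + βᵀ (c I)† β + tr(c X Xᵀ + v I)/‖y‖₂² equals (2n/‖y‖₂) · ( √(MSPE(β)) + λ ‖β‖₂ ), where MSPE(β) = ‖y − Xβ‖₂²/n, Ĉ = XᵀX/n, and λ = √(tr(Ĉ)/n). Consequently, minimizing this infimum over β is equivalent to minimizing the square-root ridge regression criterion √(MSPE(β))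 + λ ‖β‖₂ with the tuned regularization parameter λ = √(tr(Ĉ)/n). -/
/-! For fixed `β` the objective splits as
`(‖y - Xβ‖² / v + v · n / ‖y‖²) + (‖β‖² / c + c · tr(X Xᵀ) / ‖y‖²)`
with independent constraints on `v` and `c`. By AM–GM, `a / v + v k` has minimum `2 √a √k` over
admissible `v ≥ 0`, attained at `v = √a / √k`; adding the two minima gives `2n / ‖y‖` times the
square-root ridge criterion, and a positive factor does not change the minimizers. -/

open Matrix

/-- The Moore–Penrose pseudoinverse of `κ I`: `κ⁻¹ I` for `κ ≠ 0`, and `0` for `κ = 0`. -/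
noncomputable def pinvScal (m : ℕ) (κ : ℝ) : Matrix (Fin m) (Fin m) ℝ :=
  if κ = 0 then 0 else κ⁻¹ • 1

/-- The inner infimum over pairs `(c, v)` of nonnegative reals with
`y − Xβ ∈ range(v I)` and `β ∈ range(c I)` of
`(y − Xβ)ᵀ (vI)† (y − Xβ) + βᵀ (cI)† β + tr(c X Xᵀ + v I)/‖y‖₂²`. -/
noncomputable def innerInf {n d : ℕ} (y : Fin n → ℝ)
    (X : Matrix (Fin n) (Fin d) ℝ) (β : Fin d → ℝ) : ℝ :=
  sInf {r : ℝ | ∃ c v : ℝ, 0 ≤ c ∧ 0 ≤ v ∧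
    y - X.mulVec β ∈
      Set.range (Matrix.mulVec (v • (1 : Matrix (Fin n) (Fin n) ℝ))) ∧
    β ∈ Set.range (Matrix.mulVec (c • (1 : Matrix (Fin d) (Fin d) ℝ))) ∧
    r = (y - X.mulVec β) ⬝ᵥ (pinvScal n v).mulVec (y - X.mulVec β) +
      β ⬝ᵥ (pinvScal d c).mulVec β +
      (c • (X * Xᵀ) + v • (1 : Matrix (Fin n) (Fin n) ℝ)).trace / (y ⬝ᵥ y)}

/-- The square-root ridge criterion `√(MSPE(β)) + λ ‖β‖₂`, with
`λ = √(tr(Ĉ)/n)` and `Ĉ = XᵀX/n`. -/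
noncomputable def ridgeCrit {n d : ℕ} (y : Fin n → ℝ)
    (X : Matrix (Fin n) (Fin d) ℝ) (β : Fin d → ℝ) : ℝ :=
  Real.sqrt ((y - X.mulVec β) ⬝ᵥ (y - X.mulVec β) / n) +
    Real.sqrt (((1 / (n : ℝ)) • (Xᵀ * X)).trace / n) * Real.sqrt (β ⬝ᵥ β)

lemma dotProduct_self_pos {ι : Type*} [Fintype ι] {w : ι → ℝ} (hw : w ≠ 0) : 0 < w ⬝ᵥ w :=
  (by simpa using dotProduct_star_self_nonneg w : 0 ≤ w ⬝ᵥ w).lt_of_ne'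
    (dotProduct_self_eq_zero.not.2 hw)

lemma trace_mul_transpose_pos {m n : Type*} [Fintype m] [Fintype n] {X : Matrix m n ℝ}
    (hX : X ≠ 0) : 0 < (X * Xᵀ).trace := by
  have hnonneg : 0 ≤ (X * Xᵀ).trace := by
    simpa using (posSemidef_self_mul_conjTranspose X).trace_nonneg
  exact hnonneg.lt_of_ne' (by simpa using trace_mul_conjTranspose_self_eq_zero_iff.not.2 hX)

lemma mem_range_smul_one_mulVec_iff {m : ℕ} {v : ℝ} {w : Fin m → ℝ} :
    w ∈ Set.range (Matrix.mulVec (v • (1 : Matrix (Fin m) (Fin m) ℝ))) ↔ v ≠ 0 ∨ w = 0 := by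
  simp only [Set.mem_range, smul_mulVec, one_mulVec]
  constructor
  · rintro ⟨u, rfl⟩
    by_cases hv : v = 0 <;> simp [hv]
  · rintro (hv | rfl)
    · exact ⟨v⁻¹ • w, by rw [smul_smul, mul_inv_cancel₀ hv, one_smul]⟩
    · exact ⟨0, smul_zero v⟩

-- For `v = 0` both sides vanish: Lean's `x / 0 = 0` matches `(0 I)† = 0`.
lemma dotProduct_pinvScal_mulVec {m : ℕ} (v : ℝ) (w : Fin m → ℝ) :
    w ⬝ᵥ (pinvScal m v).mulVec w = (w ⬝ᵥ w) / v := by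
  by_cases hv : v = 0
  · simp [pinvScal, hv]
  · rw [pinvScal, if_neg hv, smul_mulVec, one_mulVec, dotProduct_smul, smul_eq_mul,
      div_eq_inv_mul]

lemma two_mul_sqrt_mul_sqrt_le_div_add_mul {a k v : ℝ} (ha : 0 ≤ a) (hk : 0 ≤ k)
    (hv : 0 ≤ v) (hav : v = 0 → a = 0) : 2 * √a * √k ≤ a / v + v * k := by
  rcases hv.eq_or_lt with rfl | hv
  · simp [hav rfl]
  rw [div_add' _ _ _ hv.ne', le_div_iff₀ hv]
  linear_combination sq_nonneg (√a - v * √k) + Real.sq_sqrt ha + v ^ 2 * Real.sq_sqrt hk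

lemma div_add_mul_eq_two_mul_sqrt_mul_sqrt {a k : ℝ} (ha : 0 ≤ a) (hk : 0 < k) :
    a / (√a / √k) + √a / √k * k = 2 * √a * √k := by
  have hsk : 0 < √k := Real.sqrt_pos.2 hk
  rcases ha.eq_or_lt with rfl | ha
  · simp
  have hsa : 0 < √a := Real.sqrt_pos.2 ha
  field_simp
  rw [Real.sq_sqrt ha.le, Real.sq_sqrt hk.le]
  ring

lemma isLeast_pinvScal_quad {m : ℕ} (w : Fin m → ℝ) {k : ℝ} (hk : 0 < k) :
    IsLeast {r | ∃ v : ℝ, 0 ≤ v ∧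
        w ∈ Set.range (Matrix.mulVec (v • (1 : Matrix (Fin m) (Fin m) ℝ))) ∧
        r = w ⬝ᵥ (pinvScal m v).mulVec w + v * k}
      (2 * √(w ⬝ᵥ w) * √k) := by
  have hw : 0 ≤ w ⬝ᵥ w := by simpa using dotProduct_star_self_nonneg w
  constructor
  · refine ⟨√(w ⬝ᵥ w) / √k, by positivity, mem_range_smul_one_mulVec_iff.2 ?_, ?_⟩
    · by_cases hw0 : w = 0
      · exact .inr hw0
      · exact .inl
          (div_pos (Real.sqrt_pos.2 (dotProduct_self_pos hw0)) (Real.sqrt_pos.2 hk)).ne'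
    · rw [dotProduct_pinvScal_mulVec, div_add_mul_eq_two_mul_sqrt_mul_sqrt hw hk]
  · rintro r ⟨v, hv, hwv, rfl⟩
    rw [dotProduct_pinvScal_mulVec]
    refine two_mul_sqrt_mul_sqrt_le_div_add_mul hw hk.le hv fun hv0 => ?_
    simpa [hv0, mem_range_smul_one_mulVec_iff, eq_comm] using hwv

lemma innerInf_eq {n d : ℕ} (y : Fin n → ℝ) (hy : y ≠ 0) (X : Matrix (Fin n) (Fin d) ℝ)
    (hX : X ≠ 0) (β : Fin d → ℝ) :
    innerInf y X β = 2 * √((y - X *ᵥ β) ⬝ᵥ (y - X *ᵥ β)) * √(n / (y ⬝ᵥ y)) +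
      2 * √(β ⬝ᵥ β) * √((X * Xᵀ).trace / (y ⬝ᵥ y)) := by
  have hn : 0 < n := (Function.ne_iff.1 hy).choose.pos
  have hyy : 0 < y ⬝ᵥ y := dotProduct_self_pos hy
  have htrace (c v : ℝ) :
      (c • (X * Xᵀ) + v • (1 : Matrix (Fin n) (Fin n) ℝ)).trace / (y ⬝ᵥ y) =
        c * ((X * Xᵀ).trace / (y ⬝ᵥ y)) + v * (n / (y ⬝ᵥ y)) := by
    simp only [trace_add, trace_smul, trace_one, Fintype.card_fin, smul_eq_mul]
    ring
  obtain ⟨⟨v, hv, hρv, hQv⟩, hρ⟩ :=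
    isLeast_pinvScal_quad (y - X *ᵥ β) (k := n / (y ⬝ᵥ y)) (by positivity)
  obtain ⟨⟨c, hc, hβc, hQc⟩, hβ⟩ :=
    isLeast_pinvScal_quad β (k := (X * Xᵀ).trace / (y ⬝ᵥ y))
      (div_pos (trace_mul_transpose_pos hX) hyy)
  refine IsLeast.csInf_eq ⟨⟨c, v, hc, hv, hρv, hβc, ?_⟩, ?_⟩
  · rw [htrace, hQv, hQc]
    ring
  · rintro r ⟨c, v, hc, hv, hρv, hβc, rfl⟩
    have := hρ ⟨v, hv, hρv, rfl⟩
    have := hβ ⟨c, hc, hβc, rfl⟩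
    rw [htrace]
    linarith

lemma ridgeCrit_eq {n d : ℕ} (y : Fin n → ℝ) (X : Matrix (Fin n) (Fin d) ℝ) (β : Fin d → ℝ) :
    ridgeCrit y X β =
      √((y - X *ᵥ β) ⬝ᵥ (y - X *ᵥ β)) / √n + √(X * Xᵀ).trace / n * √(β ⬝ᵥ β) := by
  rw [ridgeCrit, trace_smul, trace_mul_comm, smul_eq_mul, one_div_mul_eq_div, div_div,
    Real.sqrt_div' _ (Nat.cast_nonneg n), Real.sqrt_div' _ (by positivity),
    Real.sqrt_mul_self (Nat.cast_nonneg n)]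

lemma innerInf_eq_mul_ridgeCrit {n d : ℕ} (y : Fin n → ℝ) (hy : y ≠ 0)
    (X : Matrix (Fin n) (Fin d) ℝ) (hX : X ≠ 0) (β : Fin d → ℝ) :
    innerInf y X β = 2 * n / √(y ⬝ᵥ y) * ridgeCrit y X β := by
  have hn : (0 : ℝ) < n := Nat.cast_pos.2 (Function.ne_iff.1 hy).choose.pos
  have hyy : 0 < y ⬝ᵥ y := dotProduct_self_pos hy
  rw [innerInf_eq y hy X hX, ridgeCrit_eq, Real.sqrt_div' _ hyy.le, Real.sqrt_div' _ hyy.le]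
  have : 0 < √(y ⬝ᵥ y) := Real.sqrt_pos.2 hyy
  have : 0 < √(n : ℝ) := Real.sqrt_pos.2 hn
  field_simp
  linear_combination √((y - X *ᵥ β) ⬝ᵥ (y - X *ᵥ β)) * Real.mul_self_sqrt hn.le

/-- The inner infimum equals `(2n/‖y‖₂)(√(MSPE(β)) + λ‖β‖₂)` with the tuned
`λ = √(tr(Ĉ)/n)`; consequently minimizing it over `β` is equivalent to minimizing
the square-root ridge regression criterion. -/
theorem stmt17 {n d : ℕ} (y : Fin n → ℝ) (hy0 : y ≠ 0)
    (X : Matrix (Fin n) (Fin d) ℝ) (hX : X ≠ 0) :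
    (∀ β : Fin d → ℝ,
      innerInf y X β = 2 * n / Real.sqrt (y ⬝ᵥ y) * ridgeCrit y X β) ∧
    (∀ β : Fin d → ℝ,
      (∀ γ : Fin d → ℝ, innerInf y X β ≤ innerInf y X γ) ↔
        (∀ γ : Fin d → ℝ, ridgeCrit y X β ≤ ridgeCrit y X γ)) := by
  have hscale : 0 < 2 * (n : ℝ) / √(y ⬝ᵥ y) := by
    have := (Function.ne_iff.1 hy0).choose.pos
    have := dotProduct_self_pos hy0
    positivity
  have key := innerInf_eq_mul_ridgeCrit y hy0 X hX
  refine ⟨key, fun β => ?_⟩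
  simp only [key, mul_le_mul_iff_right₀ hscale]
end
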